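/- arXiv:1212.1582 — 7 statements merged into one kernel-verified Lean document; each statement's English description precedes it below -/
import Mathlib

section
/- For every p ∈ (2, ∞] there exists a constant a_p > 0, depending only on p and on the cut-off function χ, such that for all t ≥ 0 the truncated Oseen vortex satisfies ‖u^χ(·,t)‖_{L^p(ℝ²)} ≤ a_p (1+t)^{-(1/2 - 1/p)}. -/
open MeasureTheory Real
open scoped ENNReal

noncomputable section

abbrev E2 := EuclideanSpace ℝ (Fin 2)

/-- The rotation `x ↦ x^⊥ = (-x₂, x₁)`. -/
noncomputable def perp (x : E2) : E2 :=
  (WithLp.equiv 2 (Fin 2 → ℝ)).symm ![-(x 1), x 0]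

/-- The Oseen vortex velocity field `Θ(x,t)`. -/
noncomputable def Theta (t : ℝ) (x : E2) : E2 :=
  ((1 / (2 * π)) * (1 - Real.exp (-‖x‖ ^ 2 / (4 * (1 + t)))) / ‖x‖ ^ 2) • perp x

/-- The Oseen vorticity `Ξ(x,t)`. -/
noncomputable def Xi (t : ℝ) (x : E2) : ℝ :=
  (1 / (4 * π * (1 + t))) * Real.exp (-‖x‖ ^ 2 / (4 * (1 + t)))

/-- A smooth radially symmetric cut-off function, nondecreasing along rays,
vanishing on `{‖x‖ ≤ ρ}` and equal to `1` on `{‖x‖ ≥ M}`. -/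
structure IsCutoff (χ : E2 → ℝ) (ρ M : ℝ) : Prop where
  smooth : ContDiff ℝ (⊤ : ℕ∞) χ
  mem01 : ∀ x : E2, χ x ∈ Set.Icc (0 : ℝ) 1
  radial_mono : ∀ x y : E2, ‖x‖ ≤ ‖y‖ → χ x ≤ χ y
  zero_near : ∀ x : E2, ‖x‖ ≤ ρ → χ x = 0
  one_far : ∀ x : E2, M ≤ ‖x‖ → χ x = 1
  rho_pos : 0 < ρ
  rho_lt_M : ρ < M

/-- The truncated Oseen vortex `u^χ(x,t) = χ(x) Θ(x,t)`. -/
noncomputable def uchi (χ : E2 → ℝ) (t : ℝ) (x : E2) : E2 := χ x • Theta t x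

/-- The Laplacian of a scalar function on `ℝ²`. -/
noncomputable def lap (f : E2 → ℝ) (x : E2) : ℝ :=
  ∑ i : Fin 2, fderiv ℝ (fun y => fderiv ℝ f y (EuclideanSpace.single i 1)) x
    (EuclideanSpace.single i 1)

/-- The remainder term `R^χ(x,t) = Θ Δχ + 2 ((x·∇χ)/|x|²)(x^⊥ Ξ − Θ)`. -/
noncomputable def Rchi (χ : E2 → ℝ) (t : ℝ) (x : E2) : E2 :=
  lap χ x • Theta t x + (2 * fderiv ℝ χ x x / ‖x‖ ^ 2) • (Xi t x • perp x - Theta t x)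

lemma perp_norm (x : E2) : ‖perp x‖ = ‖x‖ := by
  simp [perp, EuclideanSpace.norm_eq, Fin.sum_univ_two, WithLp.equiv_symm_apply]
  ring_nf

lemma key_ineq (u : ℝ) (hu : 0 ≤ u) : (1 - Real.exp (-u^2)) * (1+u) ≤ 2*u := by
  rcases le_or_gt u 1 with h | h
  · nlinarith [Real.add_one_le_exp (-u^2), Real.exp_pos (-u^2)]
  · nlinarith [Real.exp_pos (-u^2)]

lemma lintegral_comp_smul' (g : E2 → ℝ≥0∞) (hg : Measurable g) {l : ℝ} (hl : 0 < l) :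
    ∫⁻ x, g (l • x) = ENNReal.ofReal ((l^2)⁻¹) * ∫⁻ x, g x := by
  have : (∫⁻ x, g (l • x)) = ∫⁻ y, g y ∂(Measure.map (l • ·) volume) :=
    (lintegral_map hg (measurable_const_smul l)).symm
  rw [this, MeasureTheory.Measure.map_addHaar_smul volume hl.ne', lintegral_smul_measure]
  congr 1
  rw [abs_of_nonneg (by positivity)]
  norm_num [finrank_euclideanSpace]

lemma lam_sq {t : ℝ} (ht : 0 ≤ t) :
    (((4:ℝ)*(1+t)) ^ (-(2:ℝ)⁻¹)) ^ 2 = ((4:ℝ)*(1+t))⁻¹ := by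
  rw [← Real.rpow_natCast (((4:ℝ)*(1+t)) ^ (-(2:ℝ)⁻¹)) 2, ← Real.rpow_mul (by linarith),
    show (-(2:ℝ)⁻¹ * (2:ℕ)) = -1 by norm_num, Real.rpow_neg_one]

lemma pointwise_bound (χ : E2 → ℝ) (hχ0 : ∀ x, 0 ≤ χ x) (hχ1 : ∀ x, χ x ≤ 1)
    {t : ℝ} (ht : 0 ≤ t) (x : E2) :
    ‖uchi χ t x‖ ≤ (((4:ℝ)*(1+t)) ^ (-(2:ℝ)⁻¹) / π) * (1 + ((4:ℝ)*(1+t)) ^ (-(2:ℝ)⁻¹) * ‖x‖)⁻¹ := by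
  set l : ℝ := ((4:ℝ)*(1+t)) ^ (-(2:ℝ)⁻¹) with hl_def
  have hl : 0 < l := Real.rpow_pos_of_pos (by linarith) _
  have hπ : 0 < π := Real.pi_pos
  have hx : 0 ≤ ‖x‖ := norm_nonneg x
  have hE : Real.exp (-‖x‖ ^ 2 / (4 * (1 + t))) ≤ 1 := by
    rw [← Real.exp_zero]
    refine Real.exp_le_exp.mpr ?_
    rw [neg_div]
    exact neg_nonpos.mpr (by positivity)
  have hrhs : 0 < (l / π) * (1 + l * ‖x‖)⁻¹ := by positivity
  rcases eq_or_ne x 0 with rfl | hx0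
  · have : ‖uchi χ t 0‖ = 0 := by
      rw [uchi, norm_smul, Theta, norm_smul, perp_norm]
      simp
    rw [this]; exact hrhs.le
  · have hr : 0 < ‖x‖ := norm_pos_iff.mpr hx0
    set r := ‖x‖
    have hexp : -r ^ 2 / (4 * (1 + t)) = -(l*r)^2 := by
      have h2 : l^2 = ((4:ℝ)*(1+t))⁻¹ := lam_sq ht
      rw [mul_pow, h2, inv_mul_eq_div]
      ring
    have hkey : (1 - Real.exp (-(l*r)^2)) * (1 + l*r) ≤ 2*(l*r) :=
      key_ineq (l*r) (by positivity)
    have hc : ‖uchi χ t x‖ ≤ (1 / (2 * π)) * (1 - Real.exp (-(l*r)^2)) / r ^ 2 * r := by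
      rw [uchi, norm_smul, Theta, norm_smul, perp_norm, hexp, Real.norm_eq_abs, Real.norm_eq_abs]
      have hcn : 0 ≤ (1 / (2 * π)) * (1 - Real.exp (-(l*r)^2)) / r ^ 2 := by
        have h1E : 0 ≤ 1 - Real.exp (-(l*r)^2) := by
          have : Real.exp (-(l*r)^2) ≤ 1 := by rw [← hexp]; exact hE
          linarith
        exact div_nonneg (mul_nonneg (by positivity) h1E) (sq_nonneg r)
      rw [abs_of_nonneg hcn]
      calc |χ x| * ((1 / (2 * π)) * (1 - Real.exp (-(l*r)^2)) / r ^ 2 * r)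
          ≤ 1 * ((1 / (2 * π)) * (1 - Real.exp (-(l*r)^2)) / r ^ 2 * r) := by
            apply mul_le_mul_of_nonneg_right _ (by positivity)
            rw [abs_of_nonneg (hχ0 x)]; exact hχ1 x
        _ = _ := one_mul _
    refine hc.trans ?_
    have hsimp : (1 / (2 * π)) * (1 - Real.exp (-(l*r)^2)) / r ^ 2 * r
        = (1 - Real.exp (-(l*r)^2)) / (2 * π * r) := by
      field_simp
    have hrhs2 : (l / π) * (1 + l * r)⁻¹ = (2*l) / (2 * π * (1 + l*r)) := by
      field_simp
    rw [hsimp, hrhs2, div_le_div_iff₀ (by positivity) (by positivity)]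
    nlinarith [mul_le_mul_of_nonneg_left hkey (le_of_lt hπ), hkey]

/-- For every `p ∈ (2,∞]` there is `a_p > 0`, depending only on `p` and `χ`, such that
`‖u^χ(·,t)‖_{L^p(ℝ²)} ≤ a_p (1+t)^{-(1/2 - 1/p)}` for all `t ≥ 0`. -/
theorem uchi_Lp_bound (χ : E2 → ℝ) (ρ M : ℝ) (hχ : IsCutoff χ ρ M)
    (p : ℝ≥0∞) (hp : 2 < p) :
    ∃ a : ℝ, 0 < a ∧ ∀ t : ℝ, 0 ≤ t →
      eLpNorm (fun x => uchi χ t x) p volume ≤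
        ENNReal.ofReal (a * (1 + t) ^ (-(1 / 2 - 1 / p.toReal))) := by
  have hπ : 0 < π := Real.pi_pos
  have hχ0 : ∀ x, 0 ≤ χ x := fun x => (hχ.mem01 x).1
  have hχ1 : ∀ x, χ x ≤ 1 := fun x => (hχ.mem01 x).2
  rcases eq_or_ne p ∞ with rfl | hptop
  · -- p = ∞
    refine ⟨1, one_pos, fun t ht => ?_⟩
    have h1t : (0:ℝ) < 1 + t := by linarith
    set l : ℝ := ((4:ℝ)*(1+t)) ^ (-(2:ℝ)⁻¹) with hl_def
    have hl : 0 < l := Real.rpow_pos_of_pos (by linarith) _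
    rw [eLpNorm_exponent_top]
    refine le_trans (eLpNormEssSup_le_of_ae_bound (C := l / π)
      (Filter.Eventually.of_forall fun x => ?_)) ?_
    · refine (pointwise_bound χ hχ0 hχ1 ht x).trans ?_
      have h1 : (1 + l * ‖x‖)⁻¹ ≤ 1 := by
        rw [inv_le_one_iff₀]; right; nlinarith [norm_nonneg x, hl]
      calc (l/π) * (1 + l * ‖x‖)⁻¹ ≤ (l/π) * 1 := by
            exact mul_le_mul_of_nonneg_left h1 (by positivity)
        _ = l/π := mul_one _
    · apply ENNReal.ofReal_le_ofReal
      simp only [ENNReal.toReal_top, div_zero, sub_zero, ENNReal.toReal_top]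
      have hle : l ≤ (1+t) ^ (-(1/2) : ℝ) := by
        rw [hl_def, show ((4:ℝ)*(1+t)) = 4 * (1+t) from rfl,
          Real.mul_rpow (by norm_num) h1t.le]
        have h4 : (4:ℝ) ^ (-(2:ℝ)⁻¹) ≤ 1 :=
          Real.rpow_le_one_of_one_le_of_nonpos (by norm_num) (by norm_num)
        have : ((1+t):ℝ) ^ (-(2:ℝ)⁻¹) = (1+t) ^ (-(1/2):ℝ) := by norm_num
        nlinarith [Real.rpow_pos_of_pos h1t (-(2:ℝ)⁻¹), this]
      calc l / π ≤ l := by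
            rw [div_le_iff₀ hπ]; nlinarith [Real.pi_gt_three, hl]
        _ ≤ (1+t) ^ (-(1/2):ℝ) := hle
        _ = 1 * (1+t) ^ (-(1/2):ℝ) := (one_mul _).symm
  · -- finite p
    set q : ℝ := p.toReal with hq_def
    have hp0 : p ≠ 0 := by positivity
    have hq : 2 < q := by
      rw [hq_def]
      have := (ENNReal.toReal_lt_toReal (by norm_num) hptop).mpr hp
      simpa using this
    have hq0 : (0:ℝ) < q := by linarith
    set H : E2 → ℝ := fun y => (1 + ‖y‖)⁻¹ with hH_def
    have hHm : Measurable H := (measurable_const.add measurable_norm).inv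
    have hint : Integrable (fun y : E2 => (1 + ‖y‖) ^ (-q)) := by
      apply integrable_one_add_norm (μ := volume)
      rw [finrank_euclideanSpace_fin]; exact_mod_cast hq
    set Kq : ℝ := ∫ y : E2, (1 + ‖y‖) ^ (-q) with hKq_def
    have hK0 : 0 ≤ Kq := integral_nonneg fun y => by positivity
    set g' : E2 → ℝ≥0∞ := fun y => ENNReal.ofReal ((1 + ‖y‖) ^ (-q)) with hg'_def
    have hg'm : Measurable g' :=
      ENNReal.measurable_ofReal.comp
        (((continuous_const.add continuous_norm).rpow_const
          (fun x => Or.inl (ne_of_gt (by positivity : (0:ℝ) < 1 + ‖x‖)))).measurable)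
    have hpt : ∀ y : E2, (‖H y‖₊ : ℝ≥0∞) ^ q = g' y := by
      intro y
      rw [← enorm_eq_nnnorm, ← ofReal_norm, ENNReal.ofReal_rpow_of_nonneg (norm_nonneg _) hq0.le,
        hg'_def]
      congr 1
      rw [Real.norm_eq_abs, abs_of_nonneg (by positivity : (0:ℝ) ≤ H y)]
      show ((1 + ‖y‖)⁻¹) ^ q = (1 + ‖y‖) ^ (-q)
      rw [Real.inv_rpow (by positivity), ← Real.rpow_neg (by positivity)]
    have hJ : (∫⁻ y : E2, g' y) = ENNReal.ofReal Kq :=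
      (ofReal_integral_eq_lintegral_ofReal hint
        (Filter.Eventually.of_forall fun y => by positivity)).symm
    refine ⟨Kq ^ (1/q) / π + 1, by positivity, fun t ht => ?_⟩
    have h1t : (0:ℝ) < 1 + t := by linarith
    have hA : (0:ℝ) < 4 * (1 + t) := by linarith
    set l : ℝ := ((4:ℝ) * (1 + t)) ^ (-(2:ℝ)⁻¹) with hl_def
    have hl : 0 < l := Real.rpow_pos_of_pos hA _
    have step1 : eLpNorm (fun x => uchi χ t x) p volume ≤
        eLpNorm (fun x => (l / π) • H (l • x)) p volume := by
      apply eLpNorm_mono_real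
      intro x
      have hb := pointwise_bound χ hχ0 hχ1 ht x
      have hnorm : H (l • x) = (1 + l * ‖x‖)⁻¹ := by
        show (1 + ‖l • x‖)⁻¹ = (1 + l * ‖x‖)⁻¹
        rw [norm_smul, Real.norm_eq_abs, abs_of_nonneg hl.le]
      rw [smul_eq_mul, hnorm]
      exact hb
    have step2 : eLpNorm (fun x => (l / π) • H (l • x)) p volume
        = ENNReal.ofReal (l / π) * eLpNorm (fun x => H (l • x)) p volume := by
      rw [show (fun x => (l / π) • H (l • x)) = (l / π) • (fun x => H (l • x)) from rfl,
        eLpNorm_const_smul]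
      congr 1
      rw [← ofReal_norm, Real.norm_eq_abs, abs_of_nonneg (by positivity)]
    have step3 : eLpNorm (fun x => H (l • x)) p volume
        = ENNReal.ofReal (((l ^ 2)⁻¹ * Kq) ^ ((1:ℝ)/q)) := by
      rw [eLpNorm_eq_lintegral_rpow_enorm_toReal hp0 hptop]
      simp only [enorm_eq_nnnorm]
      have : (∫⁻ x : E2, (‖H (l • x)‖₊ : ℝ≥0∞) ^ p.toReal)
          = ENNReal.ofReal ((l ^ 2)⁻¹) * ENNReal.ofReal Kq := by
        calc (∫⁻ x : E2, (‖H (l • x)‖₊ : ℝ≥0∞) ^ p.toReal)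
            = ∫⁻ x : E2, g' (l • x) := lintegral_congr fun x => hpt (l • x)
          _ = ENNReal.ofReal ((l ^ 2)⁻¹) * ∫⁻ y : E2, g' y :=
              lintegral_comp_smul' g' hg'm hl
          _ = _ := by rw [hJ]
      rw [this, ← ENNReal.ofReal_mul (by positivity),
        ENNReal.ofReal_rpow_of_nonneg (by positivity) (by positivity)]
    have hl2 : (l ^ 2)⁻¹ = 4 * (1 + t) := by rw [lam_sq ht, inv_inv]
    have key : (l / π) * (((l ^ 2)⁻¹ * Kq) ^ ((1:ℝ)/q))
        ≤ (Kq ^ (1/q) / π + 1) * (1 + t) ^ (-(1/2 - 1/q)) := by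
      rw [hl2, Real.mul_rpow (by positivity) hK0, Real.mul_rpow (by norm_num) h1t.le]
      have hll : l * (4:ℝ) ^ ((1:ℝ)/q) * (1 + t) ^ ((1:ℝ)/q)
          = (4:ℝ) ^ ((1:ℝ)/q - 2⁻¹) * (1 + t) ^ ((1:ℝ)/q - 2⁻¹) := by
        rw [hl_def, Real.mul_rpow (by norm_num) h1t.le,
          show (1:ℝ)/q - 2⁻¹ = -2⁻¹ + 1/q by ring,
          Real.rpow_add (by norm_num : (0:ℝ) < 4), Real.rpow_add h1t]
        ring
      have hexp_eq : ((1:ℝ)/q - 2⁻¹) = -(1/2 - 1/q) := by ring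
      have h4le : (4:ℝ) ^ ((1:ℝ)/q - 2⁻¹) ≤ 1 :=
        Real.rpow_le_one_of_one_le_of_nonpos (by norm_num)
          (by
            rw [sub_nonpos, show (2:ℝ)⁻¹ = 1/2 by norm_num,
              div_le_div_iff₀ hq0 (by norm_num)]
            linarith)
      have hKnn : (0:ℝ) ≤ Kq ^ ((1:ℝ)/q) := Real.rpow_nonneg hK0 _
      have htE : (0:ℝ) ≤ (1 + t) ^ (-(1/2 - 1/q)) := Real.rpow_nonneg h1t.le _
      calc (l / π) * ((4:ℝ) ^ ((1:ℝ)/q) * (1 + t) ^ ((1:ℝ)/q) * Kq ^ ((1:ℝ)/q))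
          = (Kq ^ ((1:ℝ)/q) / π) * (l * (4:ℝ) ^ ((1:ℝ)/q) * (1 + t) ^ ((1:ℝ)/q)) := by ring
        _ = (Kq ^ ((1:ℝ)/q) / π) * ((4:ℝ) ^ ((1:ℝ)/q - 2⁻¹) * (1 + t) ^ ((1:ℝ)/q - 2⁻¹)) := by
            rw [hll]
        _ ≤ (Kq ^ ((1:ℝ)/q) / π + 1) * (1 + t) ^ ((1:ℝ)/q - 2⁻¹) := by
            have h1 : (Kq ^ ((1:ℝ)/q) / π) * (4:ℝ) ^ ((1:ℝ)/q - 2⁻¹)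
                ≤ Kq ^ ((1:ℝ)/q) / π + 1 := by
              nlinarith [Real.rpow_pos_of_pos (show (0:ℝ) < 4 by norm_num) ((1:ℝ)/q - 2⁻¹),
                div_nonneg hKnn hπ.le]
            have h2 : (0:ℝ) ≤ (1 + t) ^ ((1:ℝ)/q - 2⁻¹) := Real.rpow_nonneg h1t.le _
            nlinarith [h1, h2, div_nonneg hKnn hπ.le]
        _ = (Kq ^ ((1:ℝ)/q) / π + 1) * (1 + t) ^ (-(1/2 - 1/q)) := by rw [hexp_eq]
    refine step1.trans ?_
    rw [step2, step3, ← ENNReal.ofReal_mul (by positivity)]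
    exact ENNReal.ofReal_le_ofReal key

end
end

section
/- There exists a constant κ₃ > 0, depending only on the cut-off function χ, such that for every continuously differentiable vector field u : ℝ² → ℝ² and every t ≥ 0 one has |∫_{ℝ²} R^χ(x,t) · u(x) dx| ≤ (κ₃/(1+t)) ‖∇u‖_{L²(D)}, where D = {x : ρ ≤ |x| ≤ M} is a compact annulus containing the support of ∇χ. -/
open MeasureTheory Real
open scoped ENNReal

noncomputable section

namespace RchiAux
open Topology Filter


noncomputable def eC : ℂ ≃ₗᵢ[ℝ] E2 := Complex.orthonormalBasisOneI.repr

lemma eC_apply (z : ℂ) : eC z = ![z.re, z.im] := Complex.orthonormalBasisOneI_repr_apply z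

lemma eC_symm_apply (x : E2) : eC.symm x = x 0 + x 1 * Complex.I :=
  Complex.orthonormalBasisOneI_repr_symm_apply x

lemma perp_eq (x : E2) : perp x = eC (Complex.I * eC.symm x) := by
  ext i
  fin_cases i <;>
    simp [perp, eC_apply, eC_symm_apply]

lemma norm_perp (x : E2) : ‖perp x‖ = ‖x‖ := by
  rw [perp_eq]
  simp [eC.norm_map]

lemma perp_neg (x : E2) : perp (-x) = -perp x := by
  rw [perp_eq, perp_eq]
  simp [mul_neg]

lemma continuous_perp : Continuous perp := by
  have : perp = fun x => eC (Complex.I * eC.symm x) := funext perp_eq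
  rw [this]
  exact eC.continuous.comp (continuous_const.mul eC.symm.continuous)

noncomputable def Rot (θ : ℝ) : E2 ≃ₗᵢ[ℝ] E2 :=
  (eC.symm.trans (rotation (Circle.exp θ))).trans eC

lemma Rot_apply (θ : ℝ) (x : E2) :
    Rot θ x = eC (Complex.exp (θ * Complex.I) * eC.symm x) := by
  simp [Rot, rotation_apply, Circle.coe_exp]

lemma Rot_zero (x : E2) : Rot 0 x = x := by
  rw [Rot_apply]; simp

lemma Rot_pi (x : E2) : Rot π x = -x := by
  rw [Rot_apply]
  rw [Complex.exp_pi_mul_I]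
  simp

lemma hasDerivAt_Rot (θ : ℝ) (x : E2) :
    HasDerivAt (fun s => Rot s x)
      (eC (Complex.exp (θ * Complex.I) * Complex.I * eC.symm x)) θ := by
  have h1 : HasDerivAt (fun s : ℝ => (s : ℂ) * Complex.I) Complex.I θ := by
    simpa using (Complex.ofRealCLM.hasDerivAt (x := θ)).mul_const Complex.I
  have h2 := (h1.cexp).mul_const (eC.symm x)
  have h3 := (eC.toContinuousLinearEquiv.toContinuousLinearMap.hasFDerivAt).comp_hasDerivAt θ h2
  have h4 : (fun s : ℝ => eC.toContinuousLinearEquiv.toContinuousLinearMap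
      (Complex.exp (↑s * Complex.I) * eC.symm x)) = fun s => Rot s x := by
    funext s; rw [Rot_apply]; rfl
  simp only [Function.comp_def] at h3
  rw [h4] at h3
  simpa using h3

lemma continuous_Rot : Continuous (fun p : ℝ × E2 => Rot p.1 p.2) := by
  have : (fun p : ℝ × E2 => Rot p.1 p.2)
      = fun p => eC (Complex.exp (p.1 * Complex.I) * eC.symm p.2) := by
    funext p; rw [Rot_apply]
  rw [this]
  fun_prop


/- ## parity of derivatives -/


lemma fderiv_comp_neg {F : Type*} [NormedAddCommGroup F] [NormedSpace ℝ F]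
    (f : E2 → F) (hf : Differentiable ℝ f) (x v : E2) :
    fderiv ℝ (fun y => f (-y)) x v = -fderiv ℝ f (-x) v := by
  have hneg : HasFDerivAt (fun y : E2 => -y) (-(ContinuousLinearMap.id ℝ E2)) x := by
    exact (hasFDerivAt_id (𝕜 := ℝ) x).neg
  have h := ((hf (-x)).hasFDerivAt).comp x hneg
  rw [Function.comp_def] at h
  rw [h.fderiv]
  simp

lemma fderiv_even {F : Type*} [NormedAddCommGroup F] [NormedSpace ℝ F]
    (f : E2 → F) (hf : Differentiable ℝ f) (he : ∀ y, f (-y) = f y) (x v : E2) :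
    fderiv ℝ f (-x) v = -fderiv ℝ f x v := by
  have h := fderiv_comp_neg f hf x v
  have : (fun y : E2 => f (-y)) = f := funext he
  rw [this] at h
  rw [h, neg_neg]

lemma fderiv_odd {F : Type*} [NormedAddCommGroup F] [NormedSpace ℝ F]
    (f : E2 → F) (hf : Differentiable ℝ f) (ho : ∀ y, f (-y) = -f y) (x v : E2) :
    fderiv ℝ f (-x) v = fderiv ℝ f x v := by
  have h := fderiv_comp_neg f hf x v
  have h2 : (fun y : E2 => f (-y)) = fun y => -f y := funext ho
  rw [h2] at h
  have h3 : fderiv ℝ (fun y => -f y) x v = -fderiv ℝ f x v := by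
    rw [fderiv_fun_neg]; simp
  rw [h3] at h
  exact (neg_injective h).symm


/- ## cutoff lemmas -/

variable {χ : E2 → ℝ} {ρ M : ℝ}

lemma chi_even (hχ : IsCutoff χ ρ M) (x : E2) : χ (-x) = χ x :=
  le_antisymm (hχ.radial_mono _ _ (by simp)) (hχ.radial_mono _ _ (by simp))

lemma chi_diff (hχ : IsCutoff χ ρ M) : Differentiable ℝ χ :=
  hχ.smooth.differentiable (by simp)

lemma g_smooth (hχ : IsCutoff χ ρ M) (i : Fin 2) :
    ContDiff ℝ (⊤ : ℕ∞) (fun y => fderiv ℝ χ y (EuclideanSpace.single i 1)) :=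
  (hχ.smooth.fderiv_right (by simp)).clm_apply contDiff_const

lemma g_odd (hχ : IsCutoff χ ρ M) (i : Fin 2) (y : E2) :
    fderiv ℝ χ (-y) (EuclideanSpace.single i 1) = -fderiv ℝ χ y (EuclideanSpace.single i 1) :=
  fderiv_even χ (chi_diff hχ) (chi_even hχ) y _

lemma fderiv_chi_neg_apply (hχ : IsCutoff χ ρ M) (x : E2) :
    fderiv ℝ χ (-x) (-x) = fderiv ℝ χ x x := by
  rw [fderiv_even χ (chi_diff hχ) (chi_even hχ) x (-x)]
  simp

lemma lap_even (hχ : IsCutoff χ ρ M) (x : E2) : lap χ (-x) = lap χ x := by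
  unfold lap
  refine Finset.sum_congr rfl fun i _ => ?_
  exact fderiv_odd _ ((g_smooth hχ i).differentiable (by simp)) (g_odd hχ i) x _

lemma Theta_neg (t : ℝ) (x : E2) : Theta t (-x) = -Theta t x := by
  unfold Theta
  rw [norm_neg, perp_neg, smul_neg]

lemma Xi_even (t : ℝ) (x : E2) : Xi t (-x) = Xi t x := by
  unfold Xi; rw [norm_neg]

lemma Rchi_neg (hχ : IsCutoff χ ρ M) (t : ℝ) (x : E2) : Rchi χ t (-x) = -Rchi χ t x := by
  unfold Rchi
  rw [lap_even hχ, Theta_neg, Xi_even, perp_neg, norm_neg, fderiv_chi_neg_apply hχ]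
  module

/- ## support -/

lemma fderiv_chi_eventually_zero {x : E2} {c : ℝ} (h : ∀ᶠ y in 𝓝 x, χ y = c) :
    ∀ᶠ y in 𝓝 x, fderiv ℝ χ y = 0 := by
  filter_upwards [h.eventually_nhds] with y hy
  have h2 : χ =ᶠ[𝓝 y] fun _ => c := hy
  rw [h2.fderiv_eq]
  exact fderiv_const_apply c

lemma Rchi_zero (hχ : IsCutoff χ ρ M) (t : ℝ) {x : E2}
    (hx : ‖x‖ < ρ ∨ M < ‖x‖) : Rchi χ t x = 0 := by
  have hc : ∃ c : ℝ, ∀ᶠ y in 𝓝 x, χ y = c := by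
    rcases hx with h | h
    · refine ⟨0, ?_⟩
      have hop : IsOpen {y : E2 | ‖y‖ < ρ} := isOpen_lt continuous_norm continuous_const
      filter_upwards [hop.mem_nhds h] with y hy
      exact hχ.zero_near y hy.le
    · refine ⟨1, ?_⟩
      have hop : IsOpen {y : E2 | M < ‖y‖} := isOpen_lt continuous_const continuous_norm
      filter_upwards [hop.mem_nhds h] with y hy
      exact hχ.one_far y hy.le
  obtain ⟨c, hc⟩ := hc
  have hev := fderiv_chi_eventually_zero (χ := χ) hc
  have h1 : fderiv ℝ χ x = 0 := hev.self_of_nhds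
  have h2 : lap χ x = 0 := by
    unfold lap
    refine Finset.sum_eq_zero fun i _ => ?_
    have hgz : (fun y => fderiv ℝ χ y (EuclideanSpace.single i 1)) =ᶠ[𝓝 x]
        fun _ => (0 : ℝ) := by
      filter_upwards [hev] with y hy
      rw [hy]; rfl
    rw [hgz.fderiv_eq]
    rw [fderiv_const_apply]
    rfl
  unfold Rchi
  rw [h1, h2]
  simp

/- ## continuity -/

lemma cont_lap (hχ : IsCutoff χ ρ M) : Continuous (lap χ) := by
  unfold lap
  exact continuous_finset_sum _ fun i _ =>
    ((g_smooth hχ i).fderiv_right (m := (⊤ : ℕ∞)) (by simp)).continuous.clm_apply continuous_const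

lemma cont_Xi (t : ℝ) : Continuous (Xi t) := by
  unfold Xi; fun_prop

lemma contOn_Theta (t : ℝ) : ContinuousOn (Theta t) {x : E2 | x ≠ 0} := by
  unfold Theta
  apply ContinuousOn.fun_smul _ continuous_perp.continuousOn
  apply ContinuousOn.div (by fun_prop) (by fun_prop)
  intro x hx
  have : ‖x‖ ≠ 0 := fun h => hx (norm_eq_zero.mp h)
  positivity

lemma contOn_Rchi (hχ : IsCutoff χ ρ M) (t : ℝ) :
    ContinuousOn (Rchi χ t) {x : E2 | x ≠ 0} := by
  unfold Rchi
  apply ContinuousOn.add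
  · exact (cont_lap hχ).continuousOn.smul (contOn_Theta t)
  · apply ContinuousOn.fun_smul
    · apply ContinuousOn.div
      · have : Continuous fun x : E2 => 2 * fderiv ℝ χ x x :=
          continuous_const.mul
            (((hχ.smooth.fderiv_right (m := (⊤ : ℕ∞)) (by simp)).continuous).clm_apply continuous_id)
        exact this.continuousOn
      · fun_prop
      · intro x hx
        have : ‖x‖ ≠ 0 := fun h => hx (norm_eq_zero.mp h)
        positivity
    · exact ((cont_Xi t).continuousOn.smul continuous_perp.continuousOn).sub (contOn_Theta t)

/- ## pointwise bounds -/

lemma norm_Theta_le (t : ℝ) (ht : 0 ≤ t) (x : E2) :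
    ‖Theta t x‖ ≤ ‖x‖ / (8 * π * (1 + t)) := by
  have hπ := Real.pi_pos
  have ht1 : (0:ℝ) < 1 + t := by linarith
  unfold Theta
  rw [norm_smul, norm_perp, Real.norm_eq_abs]
  rcases eq_or_ne x 0 with rfl | hx
  · simp
  have hn : 0 < ‖x‖ := norm_pos_iff.mpr hx
  have hA : (-‖x‖ ^ 2 / (4 * (1 + t))) = -(‖x‖ ^ 2 / (4 * (1 + t))) := by ring
  rw [hA]
  set a : ℝ := ‖x‖ ^ 2 / (4 * (1 + t)) with ha
  have ha0 : 0 ≤ a := by positivity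
  have h0 : 0 ≤ 1 - Real.exp (-a) := by
    have : Real.exp (-a) ≤ 1 := Real.exp_le_one_iff.mpr (by linarith)
    linarith
  have h1 : 1 - Real.exp (-a) ≤ a := by nlinarith [Real.add_one_le_exp (-a)]
  rw [abs_of_nonneg (by positivity)]
  calc 1 / (2 * π) * (1 - Real.exp (-a)) / ‖x‖ ^ 2 * ‖x‖
      ≤ 1 / (2 * π) * a / ‖x‖ ^ 2 * ‖x‖ := by gcongr
    _ = ‖x‖ / (8 * π * (1 + t)) := by rw [ha]; field_simp; ring

lemma abs_Xi_le (t : ℝ) (ht : 0 ≤ t) (x : E2) :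
    |Xi t x| ≤ 1 / (4 * π * (1 + t)) := by
  have hπ := Real.pi_pos
  have ht1 : (0:ℝ) < 1 + t := by linarith
  unfold Xi
  rw [abs_of_nonneg (by positivity)]
  have h1 : Real.exp (-‖x‖ ^ 2 / (4 * (1 + t))) ≤ 1 := by
    apply Real.exp_le_one_iff.mpr
    have : (0:ℝ) ≤ ‖x‖ ^ 2 := by positivity
    have h4 : (0:ℝ) < 4 * (1 + t) := by linarith
    rw [neg_div]
    simp only [neg_nonpos]
    positivity
  have hc : (0:ℝ) ≤ 1 / (4 * π * (1 + t)) := by positivity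
  nlinarith [h1, hc]

lemma norm_Rchi_le (hχ : IsCutoff χ ρ M) {C1 C2 : ℝ} (hC1n : 0 ≤ C1) (hC2n : 0 ≤ C2)
    (t : ℝ) (ht : 0 ≤ t) {x : E2} (hx : ρ ≤ ‖x‖ ∧ ‖x‖ ≤ M)
    (hC1 : |lap χ x| ≤ C1) (hC2 : ‖fderiv ℝ χ x‖ ≤ C2) :
    ‖Rchi χ t x‖ ≤
      (C1 * M / (8 * π) + 2 * C2 * M / ρ ^ 2 * (M / (4 * π) + M / (8 * π))) / (1 + t) := by
  have hπ := Real.pi_pos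
  have ht1 : (0:ℝ) < 1 + t := by linarith
  have hρ : 0 < ρ := hχ.rho_pos
  have hM : 0 < M := hρ.trans hχ.rho_lt_M
  have hxM : ‖x‖ ≤ M := hx.2
  have hθ : ‖Theta t x‖ ≤ M / (8 * π * (1 + t)) :=
    (norm_Theta_le t ht x).trans (by gcongr)
  have hXi : |Xi t x| ≤ 1 / (4 * π * (1 + t)) := abs_Xi_le t ht x
  have hfx : |fderiv ℝ χ x x| ≤ C2 * M := by
    have h := (fderiv ℝ χ x).le_opNorm x
    rw [Real.norm_eq_abs] at h
    exact h.trans (mul_le_mul hC2 hxM (norm_nonneg _) hC2n)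
  have hx2 : ρ ^ 2 ≤ ‖x‖ ^ 2 := by nlinarith [hx.1]
  have hcoef : |2 * fderiv ℝ χ x x / ‖x‖ ^ 2| ≤ 2 * C2 * M / ρ ^ 2 := by
    rw [abs_div, abs_mul]
    rw [abs_of_nonneg (by positivity : (0:ℝ) ≤ ‖x‖ ^ 2)]
    have h2 : |(2:ℝ)| = 2 := by norm_num
    rw [h2]
    apply div_le_div₀ (by positivity) (by nlinarith [hfx]) (by positivity) hx2
  have e3 : ‖Xi t x • perp x - Theta t x‖ ≤ |Xi t x| * ‖x‖ + ‖Theta t x‖ := by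
    refine (norm_sub_le _ _).trans ?_
    rw [norm_smul, Real.norm_eq_abs, norm_perp]
  have tri : ‖Rchi χ t x‖ ≤ |lap χ x| * ‖Theta t x‖
      + |2 * fderiv ℝ χ x x / ‖x‖ ^ 2| * (|Xi t x| * ‖x‖ + ‖Theta t x‖) := by
    unfold Rchi
    refine (norm_add_le _ _).trans ?_
    rw [norm_smul, norm_smul, Real.norm_eq_abs, Real.norm_eq_abs]
    have := mul_le_mul_of_nonneg_left e3 (abs_nonneg (2 * fderiv ℝ χ x x / ‖x‖ ^ 2))
    linarith
  have h1 : |lap χ x| * ‖Theta t x‖ ≤ C1 * (M / (8 * π * (1 + t))) :=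
    mul_le_mul hC1 hθ (norm_nonneg _) hC1n
  have h2 : |2 * fderiv ℝ χ x x / ‖x‖ ^ 2| * (|Xi t x| * ‖x‖ + ‖Theta t x‖)
      ≤ (2 * C2 * M / ρ ^ 2) * (1 / (4 * π * (1 + t)) * M + M / (8 * π * (1 + t))) := by
    apply mul_le_mul hcoef _ (by positivity) (by positivity)
    have h3 : |Xi t x| * ‖x‖ ≤ 1 / (4 * π * (1 + t)) * M :=
      mul_le_mul hXi hxM (norm_nonneg _) (by positivity)
    linarith
  have heq : C1 * (M / (8 * π * (1 + t)))
      + (2 * C2 * M / ρ ^ 2) * (1 / (4 * π * (1 + t)) * M + M / (8 * π * (1 + t)))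
      = (C1 * M / (8 * π) + 2 * C2 * M / ρ ^ 2 * (M / (4 * π) + M / (8 * π))) / (1 + t) := by
    field_simp
  linarith [tri, h1, h2, heq.le, heq.ge]


/- ## FTC along rotations -/

lemma diff_bound (u : E2 → E2) (hu : ContDiff ℝ 1 u) (x : E2) :
    ‖u x - u (-x)‖ ≤ (∫ θ in Set.Ioc (0:ℝ) π, ‖fderiv ℝ u (Rot θ x)‖) * ‖x‖ := by
  set V : ℝ → E2 := fun θ => eC (Complex.exp (θ * Complex.I) * Complex.I * eC.symm x) with hV
  set f' : ℝ → E2 := fun θ => fderiv ℝ u (Rot θ x) (V θ) with hf'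
  have hRotc : Continuous fun θ : ℝ => Rot θ x := by
    have h : (fun θ : ℝ => Rot θ x) = fun θ : ℝ => eC (Complex.exp (θ * Complex.I) * eC.symm x) := by
      funext θ; rw [Rot_apply]
    rw [h]
    exact eC.continuous.comp
      (((Complex.continuous_ofReal.mul continuous_const).cexp).mul continuous_const)
  have hVc : Continuous V := by
    apply eC.continuous.comp
    exact (((Complex.continuous_ofReal.mul continuous_const).cexp).mul
      continuous_const).mul continuous_const
  have hfd : Continuous fun y => fderiv ℝ u y := hu.continuous_fderiv one_ne_zero
  have hf'c : Continuous f' := (hfd.comp hRotc).clm_apply hVc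
  have hder : ∀ θ ∈ Set.uIcc (0:ℝ) π, HasDerivAt (fun s => u (Rot s x)) (f' θ) θ := by
    intro θ _
    exact ((hu.differentiable one_ne_zero (Rot θ x)).hasFDerivAt).comp_hasDerivAt θ
      (hasDerivAt_Rot θ x)
  have key := intervalIntegral.integral_eq_sub_of_hasDerivAt hder (hf'c.intervalIntegrable 0 π)
  rw [Rot_pi, Rot_zero] at key
  have h2 : u x - u (-x) = -∫ θ in (0:ℝ)..π, f' θ := by rw [key]; abel
  have hVnorm : ∀ θ : ℝ, ‖V θ‖ = ‖x‖ := by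
    intro θ
    rw [hV]
    simp only [LinearIsometryEquiv.norm_map, norm_mul, Complex.norm_exp_ofReal_mul_I,
      Complex.norm_I, one_mul, mul_one]
  calc ‖u x - u (-x)‖ = ‖∫ θ in (0:ℝ)..π, f' θ‖ := by rw [h2, norm_neg]
    _ ≤ ∫ θ in (0:ℝ)..π, ‖f' θ‖ :=
        intervalIntegral.norm_integral_le_integral_norm Real.pi_nonneg
    _ ≤ ∫ θ in (0:ℝ)..π, ‖fderiv ℝ u (Rot θ x)‖ * ‖x‖ := by
        apply intervalIntegral.integral_mono_on Real.pi_nonneg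
          (hf'c.norm.intervalIntegrable 0 π)
          (((hfd.comp hRotc).norm.mul continuous_const).intervalIntegrable 0 π)
        intro θ _
        calc ‖f' θ‖ ≤ ‖fderiv ℝ u (Rot θ x)‖ * ‖V θ‖ := (fderiv ℝ u (Rot θ x)).le_opNorm _
          _ = ‖fderiv ℝ u (Rot θ x)‖ * ‖x‖ := by rw [hVnorm]
    _ = (∫ θ in Set.Ioc (0:ℝ) π, ‖fderiv ℝ u (Rot θ x)‖) * ‖x‖ := by
        rw [intervalIntegral.integral_of_le Real.pi_nonneg]
        exact integral_mul_const ‖x‖ _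

end RchiAux

/-- There is `κ₃ > 0`, depending only on `χ`, such that for every `C¹` vector field
`u : ℝ² → ℝ²` and every `t ≥ 0`,
`|∫_{ℝ²} R^χ(x,t) · u(x) dx| ≤ (κ₃/(1+t)) ‖∇u‖_{L²(D)}`, where
`D = {x : ρ ≤ |x| ≤ M}` contains the support of `∇χ`. -/
theorem Rchi_duality_bound (χ : E2 → ℝ) (ρ M : ℝ) (hχ : IsCutoff χ ρ M) :
    ∃ κ₃ : ℝ, 0 < κ₃ ∧ ∀ u : E2 → E2, ContDiff ℝ 1 u → ∀ t : ℝ, 0 ≤ t →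
      |∫ x : E2, (inner ℝ (Rchi χ t x) (u x) : ℝ)| ≤
        κ₃ / (1 + t) *
          (∫ x in {x : E2 | ρ ≤ ‖x‖ ∧ ‖x‖ ≤ M}, ‖fderiv ℝ u x‖ ^ 2) ^ ((1 : ℝ) / 2) := by
  classical
  open RchiAux in
  have hπ := Real.pi_pos
  have hρ : 0 < ρ := hχ.rho_pos
  have hM : 0 < M := hρ.trans hχ.rho_lt_M
  set D : Set E2 := {x : E2 | ρ ≤ ‖x‖ ∧ ‖x‖ ≤ M} with hD
  have hDclosed : IsClosed D := by
    have h : D = (fun x : E2 => ‖x‖) ⁻¹' Set.Icc ρ M := rfl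
    rw [h]; exact isClosed_Icc.preimage continuous_norm
  have hDcomp : IsCompact D := by
    apply Metric.isCompact_of_isClosed_isBounded hDclosed
    apply (Metric.isBounded_closedBall (x := (0:E2)) (r := M)).subset
    intro x hx
    simpa [Metric.mem_closedBall, dist_zero_right] using hx.2
  have hDmeas : MeasurableSet D := hDclosed.measurableSet
  have hDfin : volume D < ⊤ := hDcomp.measure_lt_top
  obtain ⟨C1', hC1'⟩ := hDcomp.exists_bound_of_continuousOn (RchiAux.cont_lap hχ).continuousOn
  obtain ⟨C2', hC2'⟩ := hDcomp.exists_bound_of_continuousOn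
    ((hχ.smooth.fderiv_right (m := (⊤ : ℕ∞)) (by simp))).continuous.continuousOn
  set C1 : ℝ := max C1' 0 with hC1def
  set C2 : ℝ := max C2' 0 with hC2def
  have hC1 : ∀ x ∈ D, |lap χ x| ≤ C1 := fun x hx =>
    le_trans (by simpa [Real.norm_eq_abs] using hC1' x hx) (le_max_left _ _)
  have hC2 : ∀ x ∈ D, ‖fderiv ℝ χ x‖ ≤ C2 := fun x hx => (hC2' x hx).trans (le_max_left _ _)
  have hC1n : (0:ℝ) ≤ C1 := le_max_right _ _
  have hC2n : (0:ℝ) ≤ C2 := le_max_right _ _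
  set C : ℝ := C1 * M / (8 * π) + 2 * C2 * M / ρ ^ 2 * (M / (4 * π) + M / (8 * π)) with hCdef
  have hCn : 0 ≤ C := by
    rw [hCdef]; positivity
  set vol : ℝ := (volume D).toReal with hvol
  have hvoln : 0 ≤ vol := ENNReal.toReal_nonneg
  set W : ℝ := vol ^ ((1:ℝ)/2) with hW
  have hWn : 0 ≤ W := Real.rpow_nonneg hvoln _
  refine ⟨C * M * π * W / 2 + 1, by positivity, ?_⟩
  intro u hu t ht
  have ht1 : (0:ℝ) < 1 + t := by linarith
  set du : E2 → ℝ := fun x => ‖fderiv ℝ u x‖ with hdu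
  have hduc : Continuous du := (hu.continuous_fderiv one_ne_zero).norm
  have hRsupp : ∀ x, x ∉ D → Rchi χ t x = 0 := by
    intro x hx
    apply RchiAux.Rchi_zero hχ t
    rw [hD] at hx
    simp only [Set.mem_setOf_eq, not_and_or, not_le] at hx
    exact hx
  have hDne : D ⊆ {x : E2 | x ≠ 0} := by
    intro x hx h0
    rw [hD] at hx
    rw [h0] at hx
    simp only [Set.mem_setOf_eq, norm_zero] at hx
    linarith [hx.1]
  have hRcont : ContinuousOn (fun x => Rchi χ t x) D := (RchiAux.contOn_Rchi hχ t).mono hDne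
  have hIw : ∀ w : E2 → E2, Continuous w →
      Integrable (fun x : E2 => (inner ℝ (Rchi χ t x) (w x) : ℝ)) := by
    intro w hw
    have hsub : Function.support (fun x : E2 => (inner ℝ (Rchi χ t x) (w x) : ℝ)) ⊆ D := by
      intro x hx
      by_contra hxD
      apply hx
      show (inner ℝ (Rchi χ t x) (w x) : ℝ) = 0
      rw [hRsupp x hxD]
      exact inner_zero_left _
    rw [← integrableOn_iff_integrable_of_support_subset hsub]
    exact (hRcont.inner hw.continuousOn).integrableOn_compact hDcomp
  set A : ℝ := ∫ x : E2, (inner ℝ (Rchi χ t x) (u x) : ℝ) with hA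
  have negE : MeasurePreserving (fun x : E2 => -x) (volume : Measure E2) volume :=
    (LinearIsometryEquiv.neg ℝ (E := E2)).measurePreserving
  have negEmb : MeasurableEmbedding (fun x : E2 => -x) :=
    (Homeomorph.neg E2).measurableEmbedding
  have hB : (∫ x : E2, (inner ℝ (Rchi χ t x) (u (-x)) : ℝ)) = -A := by
    have h1 := negE.integral_comp negEmb (fun y : E2 => (inner ℝ (Rchi χ t y) (u (-y)) : ℝ))
    simp only [neg_neg, RchiAux.Rchi_neg hχ, inner_neg_left] at h1
    rw [integral_neg] at h1
    rw [← h1, hA]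
  have hsym : A = ∫ x : E2, (inner ℝ (Rchi χ t x) (u x - u (-x)) : ℝ) / 2 := by
    have hI1 := hIw u hu.continuous
    have hI2 := hIw (fun x => u (-x)) (hu.continuous.comp continuous_neg)
    have he : (fun x : E2 => (inner ℝ (Rchi χ t x) (u x - u (-x)) : ℝ) / 2)
        = fun x => ((inner ℝ (Rchi χ t x) (u x) : ℝ) - (inner ℝ (Rchi χ t x) (u (-x)) : ℝ)) / 2 := by
      funext x; rw [inner_sub_right]
    rw [he, integral_div, integral_sub hI1 hI2, hB, hA]
    ring
  set f : E2 → ℝ := fun x => (inner ℝ (Rchi χ t x) (u x - u (-x)) : ℝ) / 2 with hf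
  have hfD : ∀ x, x ∉ D → f x = 0 := by
    intro x hx
    rw [hf]
    simp only
    rw [hRsupp x hx]
    rw [inner_zero_left, zero_div]
  have hres : (∫ x : E2, f x) = ∫ x in D, f x :=
    (setIntegral_eq_integral_of_forall_compl_eq_zero hfD).symm
  set G : E2 → ℝ := fun x => ∫ θ in Set.Ioc (0:ℝ) π, du (RchiAux.Rot θ x) with hG
  have hGn : ∀ x, 0 ≤ G x := fun x => integral_nonneg fun θ => norm_nonneg _
  have hjoint : Continuous fun p : E2 × ℝ => du (RchiAux.Rot p.2 p.1) := by
    have h : (fun p : E2 × ℝ => du (RchiAux.Rot p.2 p.1))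
        = fun p : E2 × ℝ =>
          du (RchiAux.eC (Complex.exp (p.2 * Complex.I) * RchiAux.eC.symm p.1)) := by
      funext p; rw [RchiAux.Rot_apply]
    rw [h]
    apply hduc.comp
    apply RchiAux.eC.continuous.comp
    exact ((Complex.continuous_ofReal.comp continuous_snd).mul continuous_const).cexp.mul
      (RchiAux.eC.symm.continuous.comp continuous_fst)
  have hprod : Integrable (fun p : E2 × ℝ => du (RchiAux.Rot p.2 p.1))
      ((volume.restrict D).prod (volume.restrict (Set.Ioc (0:ℝ) π))) := by
    rw [Measure.prod_restrict]
    have hcomp : IsCompact (D ×ˢ Set.Icc (0:ℝ) π) := hDcomp.prod isCompact_Icc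
    have h1 : IntegrableOn (fun p : E2 × ℝ => du (RchiAux.Rot p.2 p.1))
        (D ×ˢ Set.Icc (0:ℝ) π) (volume.prod volume) :=
      hjoint.continuousOn.integrableOn_compact hcomp
    exact h1.mono_set (Set.prod_mono_right Set.Ioc_subset_Icc_self)
  have hswap := MeasureTheory.integral_integral_swap
    (f := fun (x : E2) (θ : ℝ) => du (RchiAux.Rot θ x)) hprod
  have hrot : ∀ θ : ℝ, (∫ x in D, du (RchiAux.Rot θ x)) = ∫ x in D, du x := by
    intro θ
    have hmp : MeasurePreserving (RchiAux.Rot θ) (volume : Measure E2) volume :=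
      (RchiAux.Rot θ).measurePreserving
    have hemb : MeasurableEmbedding (RchiAux.Rot θ) :=
      (RchiAux.Rot θ).toHomeomorph.measurableEmbedding
    have hpre : (RchiAux.Rot θ) ⁻¹' D = D := by
      ext y
      simp only [Set.mem_preimage, hD, Set.mem_setOf_eq, (RchiAux.Rot θ).norm_map]
    calc (∫ x in D, du (RchiAux.Rot θ x))
        = ∫ x in (RchiAux.Rot θ) ⁻¹' D, du (RchiAux.Rot θ x) := by rw [hpre]
      _ = ∫ y in D, du y := hmp.setIntegral_preimage_emb hemb du D
  have hswap2 : (∫ x in D, G x) = π * ∫ x in D, du x := by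
    rw [hG]
    simp only
    rw [hswap]
    calc (∫ θ in Set.Ioc (0:ℝ) π, ∫ x in D, du (RchiAux.Rot θ x))
        = ∫ θ in Set.Ioc (0:ℝ) π, ∫ x in D, du x :=
          setIntegral_congr_fun measurableSet_Ioc fun θ _ => hrot θ
      _ = π * ∫ x in D, du x := by
          rw [setIntegral_const, measureReal_def, Real.volume_Ioc, smul_eq_mul]
          norm_num [Real.pi_nonneg, ENNReal.toReal_ofReal]
  have hGint : IntegrableOn G D volume := hprod.integral_prod_left
  have hfb : ∀ x ∈ D, |f x| ≤ C * M / (2 * (1 + t)) * G x := by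
    intro x hx
    have hxD : ρ ≤ ‖x‖ ∧ ‖x‖ ≤ M := hx
    have h1 : |(inner ℝ (Rchi χ t x) (u x - u (-x)) : ℝ)|
        ≤ ‖Rchi χ t x‖ * ‖u x - u (-x)‖ := abs_real_inner_le_norm _ _
    have h2 := RchiAux.diff_bound u hu x
    have h3 := RchiAux.norm_Rchi_le hχ hC1n hC2n t ht hxD (hC1 x hx) (hC2 x hx)
    have h4 : ‖x‖ ≤ M := hxD.2
    have h5 : 0 ≤ G x := hGn x
    have h2' : ‖u x - u (-x)‖ ≤ G x * M := by
      refine h2.trans ?_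
      have : (∫ θ in Set.Ioc (0:ℝ) π, ‖fderiv ℝ u (RchiAux.Rot θ x)‖) = G x := rfl
      rw [this]
      exact mul_le_mul_of_nonneg_left h4 h5
    have h6 : ‖Rchi χ t x‖ * ‖u x - u (-x)‖ ≤ C / (1 + t) * (G x * M) := by
      apply mul_le_mul h3 h2' (norm_nonneg _) (by positivity)
    have heq : C * M / (2 * (1 + t)) * G x = C / (1 + t) * (G x * M) / 2 := by
      field_simp
    rw [hf]
    simp only
    rw [abs_div, abs_two]
    rw [heq]
    have := h1.trans h6
    linarith
  have hmain : |A| ≤ C * M / (2 * (1 + t)) * ∫ x in D, G x := by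
    calc |A| = |∫ x in D, f x| := by rw [hsym, ← hf, hres]
      _ ≤ ∫ x in D, C * M / (2 * (1 + t)) * G x := by
          rw [← Real.norm_eq_abs]
          apply norm_integral_le_of_norm_le (hGint.const_mul _)
          refine (ae_restrict_iff' hDmeas).mpr (Filter.Eventually.of_forall fun x hx => ?_)
          rw [Real.norm_eq_abs]
          exact hfb x hx
      _ = C * M / (2 * (1 + t)) * ∫ x in D, G x := integral_const_mul _ _
  rw [hswap2] at hmain
  haveI : IsFiniteMeasure (volume.restrict D) :=
    ⟨by rw [Measure.restrict_apply_univ]; exact hDfin⟩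
  obtain ⟨K, hK⟩ := hDcomp.exists_bound_of_continuousOn hduc.continuousOn
  have hmem : MemLp du (ENNReal.ofReal 2) (volume.restrict D) := by
    apply MemLp.mono_exponent (q := ⊤) ?_ le_top
    apply memLp_top_of_bound hduc.aestronglyMeasurable K
    exact (ae_restrict_iff' hDmeas).mpr (Filter.Eventually.of_forall fun x hx => by
      simpa using hK x hx)
  have honemem : MemLp (fun _ : E2 => (1:ℝ)) (ENNReal.ofReal 2) (volume.restrict D) :=
    memLp_const 1
  have hpq : (2:ℝ).HolderConjugate 2 := Real.holderConjugate_iff.mpr ⟨one_lt_two, by norm_num⟩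
  have hCS := integral_mul_le_Lp_mul_Lq_of_nonneg hpq
    (Filter.Eventually.of_forall fun x => norm_nonneg (fderiv ℝ u x))
    (Filter.Eventually.of_forall fun _ => zero_le_one) hmem honemem
  have hpow : ∀ y : ℝ, y ^ (2:ℝ) = y ^ 2 := fun y => by
    rw [show (2:ℝ) = ((2:ℕ):ℝ) by norm_num, Real.rpow_natCast]
  simp only [mul_one, hpow, one_pow] at hCS
  have hvol1 : (∫ _ in D, (1:ℝ)) = vol := by
    rw [setIntegral_const, smul_eq_mul, mul_one, hvol, measureReal_def]
  rw [hvol1] at hCS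
  set I2 : ℝ := (∫ x in D, du x ^ 2) ^ ((1:ℝ)/2) with hI2
  have hI2n : 0 ≤ I2 := Real.rpow_nonneg (integral_nonneg fun x => by positivity) _
  have hJ : (∫ x in D, du x) ≤ I2 * W := hCS
  have hcoefn : 0 ≤ C * M / (2 * (1 + t)) := by positivity
  calc |A| ≤ C * M / (2 * (1 + t)) * (π * ∫ x in D, du x) := hmain
    _ ≤ C * M / (2 * (1 + t)) * (π * (I2 * W)) := by
        apply mul_le_mul_of_nonneg_left _ hcoefn
        exact mul_le_mul_of_nonneg_left hJ Real.pi_pos.le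
    _ = C * M * π * W / 2 / (1 + t) * I2 := by field_simp
    _ ≤ (C * M * π * W / 2 + 1) / (1 + t) * I2 := by
        apply mul_le_mul_of_nonneg_right _ hI2n
        apply (div_le_div_iff_of_pos_right ht1).mpr
        linarith

end
end

section
/- For every x ∈ ℝ² with x ≠ 0 and every t ≥ 0, the vorticity ω^χ(x,t) = ∂₁u^χ₂(x,t) − ∂₂u^χ₁(x,t) of the truncated Oseen vortex is given by ω^χ(x,t) = χ(x) Ξ(x,t) + (1/(2π)) (1/|x|²) (1 − exp(−|x|²/(4(1+t)))) x·∇χ(x). -/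
open MeasureTheory Real
open scoped ENNReal

noncomputable section

/-- For `x ≠ 0` and `t ≥ 0`, the vorticity `ω^χ = ∂₁u^χ₂ − ∂₂u^χ₁` of the truncated
Oseen vortex equals `χ(x)Ξ(x,t) + (1/(2π|x|²))(1 − e^{−|x|²/(4(1+t))}) x·∇χ(x)`. -/
theorem uchi_vorticity_formula (χ : E2 → ℝ) (ρ M : ℝ) (hχ : IsCutoff χ ρ M)
    (t : ℝ) (ht : 0 ≤ t) (x : E2) (hx : x ≠ 0) :
    fderiv ℝ (fun y => uchi χ t y 1) x (EuclideanSpace.single 0 1)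
      - fderiv ℝ (fun y => uchi χ t y 0) x (EuclideanSpace.single 1 1)
    = χ x * Xi t x +
        (1 / (2 * π)) * (1 / ‖x‖ ^ 2) * (1 - Real.exp (-‖x‖ ^ 2 / (4 * (1 + t)))) *
          fderiv ℝ χ x x := by
  have hπ : (2:ℝ) * π ≠ 0 := by positivity
  have hτ : (0:ℝ) < 1 + t := by linarith
  have hxn : ‖x‖ ≠ 0 := norm_ne_zero_iff.mpr hx
  have hs0 : (0:ℝ) < ‖x‖ ^ 2 := by positivity
  set G : ℝ → ℝ := fun s => 1 / (2 * π) * (1 - Real.exp (-s / (4 * (1 + t)))) / s with hGdef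
  set s₀ : ℝ := ‖x‖ ^ 2 with hs₀def
  -- derivative of G
  have hexp : HasDerivAt (fun s : ℝ => Real.exp (-s / (4 * (1 + t))))
      (Real.exp (-s₀ / (4 * (1 + t))) * (-1 / (4 * (1 + t)))) s₀ :=
    ((hasDerivAt_id s₀).neg.div_const _).exp
  have hnum : HasDerivAt (fun s : ℝ => 1 / (2 * π) * (1 - Real.exp (-s / (4 * (1 + t)))))
      (1 / (2 * π) * (0 - Real.exp (-s₀ / (4 * (1 + t))) * (-1 / (4 * (1 + t))))) s₀ :=
    ((hasDerivAt_const s₀ (1:ℝ)).sub hexp).const_mul _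
  have hGd : HasDerivAt G
      ((1 / (2 * π) * (0 - Real.exp (-s₀ / (4 * (1 + t))) * (-1 / (4 * (1 + t)))) * s₀
        - 1 / (2 * π) * (1 - Real.exp (-s₀ / (4 * (1 + t)))) * 1) / s₀ ^ 2) s₀ :=
    hnum.div (hasDerivAt_id s₀) (ne_of_gt hs0)
  set G' : ℝ := (1 / (2 * π) * (0 - Real.exp (-s₀ / (4 * (1 + t))) * (-1 / (4 * (1 + t)))) * s₀
        - 1 / (2 * π) * (1 - Real.exp (-s₀ / (4 * (1 + t)))) * 1) / s₀ ^ 2 with hG'def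
  have hsq : HasFDerivAt (fun y : E2 => ‖y‖ ^ 2) (2 • (innerSL ℝ x)) x :=
    (hasStrictFDerivAt_norm_sq x).hasFDerivAt
  have hF : HasFDerivAt (fun y : E2 => G (‖y‖ ^ 2)) (G' • (2 • (innerSL ℝ x))) x :=
    by have h := hGd.comp_hasFDerivAt x hsq; exact h
  have hχd : HasFDerivAt χ (fderiv ℝ χ x) x :=
    (hχ.smooth.differentiable (by simp) x).hasFDerivAt
  have hp0 : HasFDerivAt (fun y : E2 => y 0) (PiLp.proj (𝕜 := ℝ) 2 (fun _ : Fin 2 => ℝ) 0) x :=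
    (PiLp.proj (𝕜 := ℝ) 2 (fun _ : Fin 2 => ℝ) 0).hasFDerivAt
  have hp1 : HasFDerivAt (fun y : E2 => y 1) (PiLp.proj (𝕜 := ℝ) 2 (fun _ : Fin 2 => ℝ) 1) x :=
    (PiLp.proj (𝕜 := ℝ) 2 (fun _ : Fin 2 => ℝ) 1).hasFDerivAt
  have hU1 := hχd.mul (hF.mul hp0)
  have hU0 := hχd.mul (hF.mul hp1.neg)
  simp only [Pi.mul_def, Pi.neg_def] at hU1 hU0
  have e1 : (fun y : E2 => uchi χ t y 1) = fun y => χ y * (G (‖y‖ ^ 2) * y 0) := by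
    funext y
    simp [uchi, Theta, perp, hGdef, WithLp.equiv_symm_apply]
  have e0 : (fun y : E2 => uchi χ t y 0) = fun y => χ y * (G (‖y‖ ^ 2) * -(y 1)) := by
    funext y
    simp [uchi, Theta, perp, hGdef, WithLp.equiv_symm_apply]
  rw [e1, e0, hU1.fderiv, hU0.fderiv]
  have hxdec : x = x 0 • EuclideanSpace.single 0 1 + x 1 • EuclideanSpace.single 1 1 := by
    ext j; fin_cases j <;> simp [EuclideanSpace.single_apply]
  have hDx : ∀ D : E2 →L[ℝ] ℝ, D x
      = x 0 * D (EuclideanSpace.single 0 1) + x 1 * D (EuclideanSpace.single 1 1) := by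
    intro D
    conv_lhs => rw [hxdec]
    simp
  have hnorm : s₀ = x 0 * x 0 + x 1 * x 1 := by
    rw [hs₀def, EuclideanSpace.norm_eq, Real.sq_sqrt (by positivity)]
    simp [Fin.sum_univ_two, sq_abs, sq]
  simp only [ContinuousLinearMap.add_apply, ContinuousLinearMap.smul_apply,
    ContinuousLinearMap.neg_apply, PiLp.proj_apply, innerSL_apply_apply,
    EuclideanSpace.single_apply, ite_true, smul_eq_mul, Xi, hDx (fderiv ℝ χ x), hGdef, hG'def]
  have hi0 : (inner ℝ x (EuclideanSpace.single (0 : Fin 2) (1:ℝ)) : ℝ) = x 0 := by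
    simp [EuclideanSpace.inner_single_right]
  have hi1 : (inner ℝ x (EuclideanSpace.single (1 : Fin 2) (1:ℝ)) : ℝ) = x 1 := by
    simp [EuclideanSpace.inner_single_right]
  rw [hi0, hi1]
  rw [show ‖x‖ ^ 2 = s₀ from rfl] -- normalize
  set Ex : ℝ := Real.exp (-s₀ / (4 * (1 + t))) with hEx
  rw [hnorm]
  have h1 : x 0 * x 0 + x 1 * x 1 ≠ 0 := by rw [← hnorm]; exact ne_of_gt hs0
  have h2 : (1:ℝ) + t ≠ 0 := ne_of_gt hτ
  have h3 : π ≠ 0 := Real.pi_ne_zero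
  have h1' : x 0 ^ 2 + x 1 ^ 2 ≠ 0 := by rw [sq, sq]; exact h1
  field_simp
  ring

end
end

section
/- For every t ≥ 0 the vorticity of the truncated Oseen vortex satisfies ω^χ(x,t) ≥ 0 for all x ∈ ℝ², and its total mass equals one: ∫_{ℝ²} ω^χ(x,t) dx = 1. -/
open MeasureTheory Real
open scoped ENNReal

noncomputable section

/-- The vorticity `ω^χ(x,t) = χ(x)Ξ(x,t) + (1/(2π|x|²))(1 − e^{−|x|²/(4(1+t))}) x·∇χ(x)`
of the truncated Oseen vortex (extended by `0` at `x = 0`). -/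
noncomputable def omegaChi (χ : E2 → ℝ) (t : ℝ) (x : E2) : ℝ :=
  χ x * Xi t x +
    (1 / (2 * π)) * (1 / ‖x‖ ^ 2) * (1 - Real.exp (-‖x‖ ^ 2 / (4 * (1 + t)))) *
      fderiv ℝ χ x x

/-- For every `t ≥ 0` the vorticity of the truncated Oseen vortex is nonnegative
and has total mass one. -/
theorem omegaChi_nonneg_and_mass_one (χ : E2 → ℝ) (ρ M : ℝ) (hχ : IsCutoff χ ρ M)
    (t : ℝ) (ht : 0 ≤ t) :
    (∀ x : E2, 0 ≤ omegaChi χ t x) ∧ ∫ x : E2, omegaChi χ t x = 1 := by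
  obtain ⟨hsm, h01, hmono, hzero, hone, hρ, hρM⟩ := hχ
  have hdiff : Differentiable ℝ χ := hsm.differentiable (by simp)
  have ha : (0:ℝ) < 1 + t := by linarith
  have hπ : (0:ℝ) < π := Real.pi_pos
  set e0 : E2 := EuclideanSpace.single 0 1 with he0
  have he0n : ‖e0‖ = 1 := by simp [he0]
  set φ : ℝ → ℝ := fun r => χ (r • e0) with hφ
  have hφdiff : Differentiable ℝ φ := hdiff.comp (differentiable_id.smul_const e0)
  -- χ is radial
  have hrad : ∀ x : E2, χ x = φ ‖x‖ := by
    intro x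
    have h1 : ‖(‖x‖ : ℝ) • e0‖ = ‖x‖ := by
      rw [norm_smul, he0n, mul_one, Real.norm_eq_abs, abs_of_nonneg (norm_nonneg x)]
    exact le_antisymm (hmono _ _ h1.symm.le) (hmono _ _ h1.le)
  -- the radial derivative along `x`
  have hψ : ∀ x : E2, HasDerivAt (fun s : ℝ => χ (s • x)) (fderiv ℝ χ x x) 1 := by
    intro x
    have h0 : HasDerivAt (fun s : ℝ => s • x) ((1:ℝ) • x) 1 :=
      (hasDerivAt_id (1:ℝ)).smul_const x
    have := (hdiff ((1:ℝ) • x)).hasFDerivAt.comp_hasDerivAt 1 h0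
    simp only [one_smul] at this
    exact this
  have hkey : ∀ x : E2, fderiv ℝ χ x x = ‖x‖ * deriv φ ‖x‖ := by
    intro x
    rcases eq_or_ne x 0 with rfl | hx
    · simp
    have hxn : (0:ℝ) < ‖x‖ := norm_pos_iff.mpr hx
    have h2 : HasDerivAt (fun s : ℝ => φ (s * ‖x‖)) (deriv φ (1 * ‖x‖) * (1 * ‖x‖)) 1 := by
      have hin : HasDerivAt (fun s : ℝ => s * ‖x‖) (1 * ‖x‖) 1 :=
        (hasDerivAt_id (1:ℝ)).mul_const ‖x‖
      exact (hφdiff (1 * ‖x‖)).hasDerivAt.comp 1 hin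
    have heq : (fun s : ℝ => χ (s • x)) =ᶠ[nhds (1:ℝ)] (fun s : ℝ => φ (s * ‖x‖)) := by
      filter_upwards [eventually_gt_nhds (zero_lt_one)] with s hs
      rw [hrad (s • x)]
      congr 1
      rw [norm_smul, Real.norm_eq_abs, abs_of_pos hs]
    have h2' : HasDerivAt (fun s : ℝ => χ (s • x)) (deriv φ (1 * ‖x‖) * (1 * ‖x‖)) 1 :=
      h2.congr_of_eventuallyEq heq
    have := (hψ x).unique h2'
    rw [this]; ring_nf
  -- nonnegativity of the radial derivative
  have hfd_nonneg : ∀ x : E2, 0 ≤ fderiv ℝ χ x x := by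
    intro x
    have hslope : Filter.Tendsto (slope (fun s : ℝ => χ (s • x)) 1) (nhdsWithin 1 (Set.Ioi 1))
        (nhds (fderiv ℝ χ x x)) := by
      refine (hasDerivAt_iff_tendsto_slope.mp (hψ x)).mono_left (nhdsWithin_mono _ ?_)
      intro s hs
      exact Set.mem_compl_singleton_iff.mpr (ne_of_gt hs)
    refine ge_of_tendsto hslope ?_
    filter_upwards [self_mem_nhdsWithin] with s hs
    have hs1 : (1:ℝ) < s := hs
    have hmono' : χ ((1:ℝ) • x) ≤ χ (s • x) := by
      apply hmono
      rw [norm_smul, norm_smul, Real.norm_eq_abs, Real.norm_eq_abs,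
        abs_of_pos (lt_trans zero_lt_one hs1), abs_one]
      nlinarith [norm_nonneg x]
    rw [slope_def_field]
    apply div_nonneg _ (by linarith)
    simpa using sub_nonneg.mpr hmono'
  -- nonnegativity of omegaChi
  have hexp_le : ∀ r : ℝ, Real.exp (-r ^ 2 / (4 * (1 + t))) ≤ 1 := by
    intro r
    rw [Real.exp_le_one_iff]
    apply div_nonpos_of_nonpos_of_nonneg (neg_nonpos.mpr (by positivity)) (by positivity)
  have hnonneg : ∀ x : E2, 0 ≤ omegaChi χ t x := by
    intro x
    unfold omegaChi Xi
    have h1 : 0 ≤ χ x := (h01 x).1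
    apply add_nonneg
    · exact mul_nonneg h1 (by positivity)
    · apply mul_nonneg _ (hfd_nonneg x)
      apply mul_nonneg (by positivity)
      have := hexp_le ‖x‖
      linarith
  refine ⟨hnonneg, ?_⟩
  -- radial representation of omegaChi
  set H : ℝ → ℝ := fun r => φ r * ((1 / (4 * π * (1 + t))) * Real.exp (-r ^ 2 / (4 * (1 + t)))) +
      (1 / (2 * π)) * (1 / r ^ 2) * (1 - Real.exp (-r ^ 2 / (4 * (1 + t)))) *
        (r * deriv φ r) with hH
  have hHrep : ∀ x : E2, omegaChi χ t x = H ‖x‖ := by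
    intro x
    unfold omegaChi Xi
    rw [hrad x, hkey x, hH]
  have hrw : ∫ x : E2, omegaChi χ t x = ∫ x : E2, H ‖x‖ := by
    congr 1; ext x; exact hHrep x
  rw [hrw, integral_fun_norm_addHaar (volume : Measure E2) H]
  have hdim : Module.finrank ℝ E2 = 2 := by simp
  rw [hdim]
  have hvol : (volume (Metric.ball (0:E2) 1)).toReal = π := by
    rw [EuclideanSpace.volume_ball]
    norm_num
    exact Real.sq_sqrt Real.pi_nonneg
  rw [show volume.real (Metric.ball (0:E2) 1) = π from hvol]
  -- FTC on (0, ∞)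
  set G : ℝ → ℝ := fun r => (1 / (2 * π)) * (1 - Real.exp (-r ^ 2 / (4 * (1 + t)))) with hG
  set P : ℝ → ℝ := fun r => φ r * G r with hP
  have hGd : ∀ r : ℝ, HasDerivAt G ((1 / (2 * π)) * (Real.exp (-r ^ 2 / (4 * (1 + t))) *
      ((2 * r) / (4 * (1 + t))))) r := by
    intro r
    have h1 : HasDerivAt (fun r : ℝ => -r ^ 2 / (4 * (1 + t))) (-(2 * r) / (4 * (1 + t))) r := by
      have := ((hasDerivAt_pow 2 r).neg).div_const (4 * (1 + t))
      simpa using this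
    have h2 := (Real.hasDerivAt_exp (-r ^ 2 / (4 * (1 + t)))).comp r h1
    have h3 := ((hasDerivAt_const r (1:ℝ)).sub h2).const_mul (1 / (2 * π))
    refine h3.congr_deriv ?_
    ring
  have hP' : ∀ r ∈ Set.Ioi (0:ℝ), HasDerivAt P (r ^ (2 - 1) • H r) r := by
    intro r hr
    have hr0 : (0:ℝ) < r := hr
    have h1 := ((hφdiff r).hasDerivAt.mul (hGd r))
    refine h1.congr_deriv ?_
    symm
    simp only [pow_one, smul_eq_mul, hH, hG]
    field_simp
    ring
  have hP0 : P 0 = 0 := by simp [hP, hG]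
  have htend : Filter.Tendsto P Filter.atTop (nhds (1 / (2 * π))) := by
    have hq : Filter.Tendsto (fun r : ℝ => -r ^ 2 / (4 * (1 + t))) Filter.atTop Filter.atBot := by
      apply Filter.Tendsto.atBot_div_const (by positivity)
      exact Filter.tendsto_neg_atTop_atBot.comp (Filter.tendsto_pow_atTop (by norm_num))
    have hGt : Filter.Tendsto G Filter.atTop (nhds ((1 / (2 * π)) * (1 - 0))) :=
      Filter.Tendsto.const_mul _ (Filter.Tendsto.const_sub _ (Real.tendsto_exp_atBot.comp hq))
    rw [sub_zero, mul_one] at hGt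
    apply hGt.congr'
    filter_upwards [Filter.eventually_ge_atTop M] with r hrM
    have hr0 : (0:ℝ) < r := lt_of_lt_of_le (lt_trans hρ hρM) hrM
    have hφ1 : φ r = 1 := by
      apply hone
      rw [norm_smul, he0n, mul_one, Real.norm_eq_abs, abs_of_pos hr0]
      exact hrM
    rw [hP]
    simp only [hφ1, one_mul]
  have hPcont : Continuous P := by
    apply hφdiff.continuous.mul
    exact Differentiable.continuous (fun r => (hGd r).differentiableAt)
  have hpos' : ∀ r ∈ Set.Ioi (0:ℝ), 0 ≤ r ^ (2 - 1) • H r := by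
    intro r hr
    have hr0 : (0:ℝ) < r := hr
    have hHr : H r = omegaChi χ t (r • e0) := by
      rw [hHrep (r • e0), norm_smul, he0n, mul_one, Real.norm_eq_abs, abs_of_pos hr0]
    rw [smul_eq_mul]
    apply mul_nonneg (by positivity)
    rw [hHr]; exact hnonneg _
  have hint := integral_Ioi_of_hasDerivAt_of_nonneg hPcont.continuousWithinAt hP' hpos' htend
  rw [hint, hP0, sub_zero, smul_eq_mul, nsmul_eq_mul]
  field_simp
  norm_num


end
end

section
/- For every x ∈ ℝ² with x ≠ 0 and every t ≥ 0, the Oseen vortex velocity field satisfies ∂_t Θ(x,t) = ΔΘ(x,t) and (Θ(x,t)·∇)Θ(x,t) = −(x/|x|²)|Θ(x,t)|². Consequently, for every α ∈ ℝ the pair u = αΘ, with pressure gradient ∇p(x,t) = α² (x/|x|²)|Θ(x,t)|², satisfies the incompressible Navier–Stokes equations ∂_t u + (u·∇)u = Δu − ∇p on (ℝ² \ {0}) × (0,∞). -/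
open MeasureTheory Real
open scoped ENNReal

noncomputable section

/-- The componentwise Laplacian of a vector field on `ℝ²`. -/
noncomputable def vlap (u : E2 → E2) (x : E2) : E2 :=
  (WithLp.equiv 2 (Fin 2 → ℝ)).symm fun i => lap (fun y => u y i) x

namespace Oseen

noncomputable def bb (t : ℝ) : ℝ := 4 * (1 + t)
noncomputable def FF (t s : ℝ) : ℝ := 1/(2*π) * (1 - Real.exp (-s / bb t)) / s
noncomputable def F1 (t s : ℝ) : ℝ :=
  1/(2*π) * (s * Real.exp (-s/bb t) / bb t - (1 - Real.exp (-s/bb t))) / s^2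
noncomputable def F2 (t s : ℝ) : ℝ :=
  1/(2*π) * (-(s^2) * Real.exp (-s/bb t)/(bb t)^2 - 2*s*Real.exp (-s/bb t)/bb t
    + 2*(1-Real.exp (-s/bb t))) / s^3
noncomputable def Ft (t s : ℝ) : ℝ := -(4 * (1/(2*π))) * Real.exp (-s/bb t) / (bb t)^2

lemma hasDerivAt_FF_s {t s : ℝ} (hb : bb t ≠ 0) (hs : s ≠ 0) :
    HasDerivAt (FF t) (F1 t s) s := by
  have h1 : HasDerivAt (fun s' : ℝ => -s' / bb t) (-1 / bb t) s := by
    simpa using (((hasDerivAt_id s).neg).div_const (bb t))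
  have hexp := h1.exp
  have hnum : HasDerivAt (fun s' : ℝ => 1/(2*π) * (1 - Real.exp (-s'/bb t)))
      (1/(2*π) * -(Real.exp (-s/bb t) * (-1/bb t))) s := (hexp.const_sub 1).const_mul _
  have := hnum.div (hasDerivAt_id s) hs
  refine this.congr_deriv ?_
  unfold F1
  simp only [FF, id]
  field_simp

lemma hasDerivAt_F1_s {t s : ℝ} (hb : bb t ≠ 0) (hs : s ≠ 0) :
    HasDerivAt (F1 t) (F2 t s) s := by
  have h1 : HasDerivAt (fun s' : ℝ => -s' / bb t) (-1 / bb t) s := by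
    simpa using (((hasDerivAt_id s).neg).div_const (bb t))
  have hexp := h1.exp
  have hnum : HasDerivAt
      (fun s' : ℝ => 1/(2*π) * (s' * Real.exp (-s'/bb t) / bb t - (1 - Real.exp (-s'/bb t))))
      (1/(2*π) * ((1 * Real.exp (-s/bb t) + s * (Real.exp (-s/bb t) * (-1/bb t))) / bb t
        - -(Real.exp (-s/bb t) * (-1/bb t)))) s :=
    ((((hasDerivAt_id s).mul hexp).div_const (bb t)).sub (hexp.const_sub 1)).const_mul _
  have hden : HasDerivAt (fun s' : ℝ => s' ^ 2) (2 * s) s := by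
    simpa using (hasDerivAt_pow 2 s)
  have := hnum.div hden (pow_ne_zero 2 hs)
  refine this.congr_deriv ?_
  unfold F2
  field_simp
  ring

lemma hasDerivAt_FF_t {t s : ℝ} (hb : bb t ≠ 0) (hs : s ≠ 0) :
    HasDerivAt (fun τ => FF τ s) (Ft t s) t := by
  have h1 : HasDerivAt (fun τ : ℝ => 1 + τ) 1 t := by
    simpa using (hasDerivAt_id t).const_add 1
  have hbb : HasDerivAt bb 4 t := by
    unfold bb; simpa using (h1.const_mul (4:ℝ))
  have h2 := (hasDerivAt_const t (-s)).div hbb hb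
  have h3 := (((h2.exp.const_sub 1).const_mul (1/(2*π))).div_const s)
  refine h3.congr_deriv ?_
  simp only [Pi.div_apply]
  unfold Ft
  field_simp
  ring

lemma key_identity {t s : ℝ} (hb : bb t ≠ 0) (hs : s ≠ 0) :
    4 * s * F2 t s + 8 * F1 t s = Ft t s := by
  unfold F1 F2 Ft
  have hπ : (π : ℝ) ≠ 0 := Real.pi_ne_zero
  field_simp
  ring

noncomputable def perpL : E2 →L[ℝ] E2 :=
  LinearMap.toContinuousLinearMap
  { toFun := perp
    map_add' := by
      intro x y; ext i; fin_cases i <;> simp [perp] <;> try ring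
    map_smul' := by
      intro c x; ext i; fin_cases i <;> simp [perp, mul_comm] }

lemma perpL_apply (x : E2) : perpL x = perp x := rfl

lemma perp_perp (x : E2) : perp (perp x) = -x := by
  ext i; fin_cases i <;> simp [perp]

lemma norm_perp (x : E2) : ‖perp x‖ = ‖x‖ := by
  simp [EuclideanSpace.norm_eq, perp, Fin.sum_univ_two]
  ring_nf

lemma inner_perp_self (x : E2) : @inner ℝ _ _ x (perp x) = 0 := by
  have h0 : perp x 0 = -(x 1) := rfl
  have h1 : perp x 1 = x 0 := rfl
  simp [PiLp.inner_apply, Fin.sum_univ_two, h0, h1]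
  ring

lemma Theta_eq (t : ℝ) (x : E2) : Theta t x = FF t (‖x‖^2) • perp x := rfl

lemma normsq_ne {x : E2} (hx : x ≠ 0) : ‖x‖^2 ≠ 0 := by
  simpa using (norm_ne_zero_iff.mpr hx)

noncomputable def DTheta (α t : ℝ) (x : E2) : E2 →L[ℝ] E2 :=
  α • (FF t (‖x‖ ^ 2) • perpL + (F1 t (‖x‖ ^ 2) • (2 • innerSL ℝ x)).smulRight (perp x))

lemma hasFDerivAt_smul_Theta (α t : ℝ) (hb : bb t ≠ 0) {x : E2} (hx : x ≠ 0) :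
    HasFDerivAt (fun y => α • Theta t y) (DTheta α t x) x := by
  have hq : HasFDerivAt (fun y : E2 => ‖y‖ ^ 2) (2 • innerSL ℝ x) x :=
    (hasStrictFDerivAt_norm_sq x).hasFDerivAt
  have hA : HasFDerivAt (fun y : E2 => FF t (‖y‖ ^ 2))
      (F1 t (‖x‖ ^ 2) • (2 • innerSL ℝ x)) x :=
    (hasDerivAt_FF_s hb (normsq_ne hx)).comp_hasFDerivAt (f := fun y : E2 => ‖y‖ ^ 2) x hq
  have hperp : HasFDerivAt (fun y : E2 => perp y) perpL x := perpL.hasFDerivAt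
  have h := (hA.smul hperp).const_smul α
  exact h

lemma DTheta_apply (α t : ℝ) (x v : E2) :
    DTheta α t x v = α • (FF t (‖x‖ ^ 2) • perp v
      + (F1 t (‖x‖ ^ 2) * (2 * @inner ℝ _ _ x v)) • perp x) := by
  simp [DTheta, perpL_apply, smul_smul]

noncomputable def G (α t : ℝ) (i j : Fin 2) (y : E2) : ℝ :=
  α * (FF t (‖y‖ ^ 2) * perp (EuclideanSpace.single j 1) i
     + F1 t (‖y‖ ^ 2) * (2 * y j) * perp y i)

lemma fderiv_component (α t : ℝ) (hb : bb t ≠ 0) {y : E2} (hy : y ≠ 0) (i j : Fin 2) :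
    fderiv ℝ (fun z => (α • Theta t z) i) y (EuclideanSpace.single j 1) = G α t i j y := by
  have hT := hasFDerivAt_smul_Theta α t hb hy
  have hc : HasFDerivAt (fun z : E2 => (α • Theta t z) i)
      ((EuclideanSpace.proj (𝕜 := ℝ) i).comp (DTheta α t y)) y :=
    (EuclideanSpace.proj (𝕜 := ℝ) i).hasFDerivAt.comp y hT
  rw [hc.fderiv]
  simp only [ContinuousLinearMap.comp_apply, PiLp.proj_apply, DTheta_apply, G,
    PiLp.smul_apply, PiLp.add_apply, smul_eq_mul, EuclideanSpace.inner_single_right,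
    star_trivial, conj_trivial]
  ring

lemma hasFDerivAt_G (α t : ℝ) (hb : bb t ≠ 0) {x : E2} (hx : x ≠ 0) (i j : Fin 2) :
    HasFDerivAt (G α t i j)
      (α • ((perp (EuclideanSpace.single j 1) i • (F1 t (‖x‖ ^ 2) • (2 • innerSL ℝ x)))
        + ((F1 t (‖x‖ ^ 2) * (2 * x j)) •
            ((EuclideanSpace.proj (𝕜 := ℝ) i).comp perpL)
          + perp x i • (F1 t (‖x‖ ^ 2) • ((2:ℝ) • (EuclideanSpace.proj (𝕜 := ℝ) j))
              + (2 * x j) • (F2 t (‖x‖ ^ 2) • (2 • innerSL ℝ x)))))) x := by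
  have hq : HasFDerivAt (fun y : E2 => ‖y‖ ^ 2) (2 • innerSL ℝ x) x :=
    (hasStrictFDerivAt_norm_sq x).hasFDerivAt
  have hA : HasFDerivAt (fun y : E2 => FF t (‖y‖ ^ 2))
      (F1 t (‖x‖ ^ 2) • (2 • innerSL ℝ x)) x :=
    (hasDerivAt_FF_s hb (normsq_ne hx)).comp_hasFDerivAt (f := fun y : E2 => ‖y‖ ^ 2) x hq
  have hB : HasFDerivAt (fun y : E2 => F1 t (‖y‖ ^ 2))
      (F2 t (‖x‖ ^ 2) • (2 • innerSL ℝ x)) x :=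
    (hasDerivAt_F1_s hb (normsq_ne hx)).comp_hasFDerivAt (f := fun y : E2 => ‖y‖ ^ 2) x hq
  have hj : HasFDerivAt (fun y : E2 => (2:ℝ) * y j)
      ((2:ℝ) • (EuclideanSpace.proj (𝕜 := ℝ) j)) x :=
    (EuclideanSpace.proj (𝕜 := ℝ) j).hasFDerivAt.const_mul 2
  have hP : HasFDerivAt (fun y : E2 => perp y i)
      ((EuclideanSpace.proj (𝕜 := ℝ) i).comp perpL) x :=
    (EuclideanSpace.proj (𝕜 := ℝ) i).hasFDerivAt.comp x perpL.hasFDerivAt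
  have h := (((hA.mul_const (perp (EuclideanSpace.single j 1) i)).add
      ((hB.mul hj).mul hP)).const_mul α)
  exact h
  try (ext v; simp [mul_comm])

lemma norm_sq_coords (x : E2) : ‖x‖ ^ 2 = x 0 ^ 2 + x 1 ^ 2 := by
  rw [← real_inner_self_eq_norm_sq]
  simp only [PiLp.inner_apply, Fin.sum_univ_two, RCLike.inner_apply, conj_trivial]
  ring

lemma lap_component (α t : ℝ) (hb : bb t ≠ 0) {x : E2} (hx : x ≠ 0) (i : Fin 2) :
    lap (fun y => (α • Theta t y) i) x = (α * Ft t (‖x‖ ^ 2)) * perp x i := by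
  have hs := normsq_ne hx
  have hev : ∀ j : Fin 2,
      fderiv ℝ (fun y => fderiv ℝ (fun z => (α • Theta t z) i) y
          (EuclideanSpace.single j 1)) x (EuclideanSpace.single j 1)
        = fderiv ℝ (G α t i j) x (EuclideanSpace.single j 1) := by
    intro j
    have heq : (fun y => fderiv ℝ (fun z => (α • Theta t z) i) y (EuclideanSpace.single j 1))
        =ᶠ[nhds x] G α t i j := by
      filter_upwards [isOpen_compl_singleton.mem_nhds hx] with y hy
      exact fderiv_component α t hb hy i j
    rw [heq.fderiv_eq]
  unfold lap
  rw [Fin.sum_univ_two, hev 0, hev 1,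
    (hasFDerivAt_G α t hb hx i 0).fderiv, (hasFDerivAt_G α t hb hx i 1).fderiv]
  have h0 : ∀ j : Fin 2, @inner ℝ _ _ x (EuclideanSpace.single j (1:ℝ)) = x j := by
    intro j; simp [EuclideanSpace.inner_single_right]
  simp only [ContinuousLinearMap.add_apply, ContinuousLinearMap.smul_apply,
    ContinuousLinearMap.comp_apply, PiLp.proj_apply, innerSL_apply_apply, h0,
    smul_eq_mul, nsmul_eq_mul, Nat.cast_ofNat, EuclideanSpace.single_apply, perpL_apply,
    eq_self_iff_true, if_true]
  have hperp0 : ∀ y : E2, perp y 0 = -(y 1) := fun _ => rfl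
  have hperp1 : ∀ y : E2, perp y 1 = y 0 := fun _ => rfl
  have hkey := key_identity hb hs
  have hns := norm_sq_coords x
  have hdec : x 0 * perp (EuclideanSpace.single 0 1) i
      + x 1 * perp (EuclideanSpace.single 1 1) i = perp x i := by
    fin_cases i <;> simp [hperp0, hperp1, EuclideanSpace.single_apply]
  linear_combination (4 * α * F1 t (‖x‖ ^ 2)) * hdec + (α * perp x i) * hkey
    - (4 * α * F2 t (‖x‖ ^ 2) * perp x i) * hns

lemma vlap_smul_Theta (α t : ℝ) (hb : bb t ≠ 0) {x : E2} (hx : x ≠ 0) :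
    vlap (fun y => α • Theta t y) x = (α * Ft t (‖x‖ ^ 2)) • perp x := by
  unfold vlap
  ext i
  rw [WithLp.equiv_symm_apply, PiLp.toLp_apply]
  rw [lap_component α t hb hx i]
  simp

lemma perp_smul (c : ℝ) (v : E2) : perp (c • v) = c • perp v := by
  rw [← perpL_apply, ← perpL_apply, _root_.map_smul]

lemma main_lemma (t : ℝ) (hb : bb t ≠ 0) {x : E2} (hx : x ≠ 0) (α : ℝ) :
    deriv (fun s => α • Theta s x) t = (α * Ft t (‖x‖ ^ 2)) • perp x
    ∧ vlap (fun y => α • Theta t y) x = (α * Ft t (‖x‖ ^ 2)) • perp x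
    ∧ fderiv ℝ (fun y => α • Theta t y) x (α • Theta t x)
        = -(α ^ 2 * FF t (‖x‖ ^ 2) ^ 2) • x
    ∧ ‖Theta t x‖ ^ 2 / ‖x‖ ^ 2 = FF t (‖x‖ ^ 2) ^ 2 := by
  have hs := normsq_ne hx
  refine ⟨?_, vlap_smul_Theta α t hb hx, ?_, ?_⟩
  · have hd : HasDerivAt (fun τ => α • Theta τ x) (α • (Ft t (‖x‖ ^ 2) • perp x)) t :=
      ((hasDerivAt_FF_t hb hs).smul_const (perp x)).const_smul α
    rw [hd.deriv, smul_smul]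
  · rw [(hasFDerivAt_smul_Theta α t hb hx).fderiv, DTheta_apply]
    have h1 : α • Theta t x = (α * FF t (‖x‖ ^ 2)) • perp x := by
      rw [Theta_eq, smul_smul]
    have h2 : @inner ℝ _ _ x (α • Theta t x) = 0 := by
      rw [h1, real_inner_smul_right, inner_perp_self, mul_zero]
    rw [h2, h1, perp_smul, perp_perp, mul_zero, mul_zero, zero_smul, add_zero,
      smul_smul, smul_smul]
    rw [show -(α ^ 2 * FF t (‖x‖ ^ 2) ^ 2) • x
      = (α * (FF t (‖x‖ ^ 2) * (α * FF t (‖x‖ ^ 2)))) • (-x : E2) by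
        rw [smul_neg, ← neg_smul]; ring_nf]
    rw [show α * FF t (‖x‖ ^ 2) * (α * FF t (‖x‖ ^ 2))
      = α * (FF t (‖x‖ ^ 2) * (α * FF t (‖x‖ ^ 2))) by ring]
  · rw [Theta_eq, norm_smul, mul_pow, norm_perp, Real.norm_eq_abs, sq_abs]
    field_simp

end Oseen

open Oseen in

/-- For `x ≠ 0` and `t ≥ 0`, `∂_t Θ = ΔΘ` and `(Θ·∇)Θ = −(x/|x|²)|Θ|²`; consequently
for every `α ∈ ℝ` the pair `u = αΘ`, with pressure gradient
`∇p = α²(x/|x|²)|Θ|²`, solves the Navier–Stokes equations on `(ℝ²\{0}) × (0,∞)`. -/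
theorem Theta_selfsimilar_solution :
    (∀ t : ℝ, 0 ≤ t → ∀ x : E2, x ≠ 0 →
      deriv (fun s => Theta s x) t = vlap (Theta t) x ∧
      fderiv ℝ (Theta t) x (Theta t x) = -(‖Theta t x‖ ^ 2 / ‖x‖ ^ 2) • x) ∧
    ∀ α : ℝ, ∀ t : ℝ, 0 < t → ∀ x : E2, x ≠ 0 →
      deriv (fun s => α • Theta s x) t
          + fderiv ℝ (fun y => α • Theta t y) x (α • Theta t x)
        = vlap (fun y => α • Theta t y) x
          - (α ^ 2 * (‖Theta t x‖ ^ 2 / ‖x‖ ^ 2)) • x := by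
  have h1smul : ∀ t : ℝ, (fun y : E2 => (1:ℝ) • Theta t y) = Theta t := by
    intro t; funext y; rw [one_smul]
  constructor
  · intro t ht x hx
    have hb : bb t ≠ 0 := by unfold bb; nlinarith
    obtain ⟨hd, hv, hf, hn⟩ := main_lemma t hb hx 1
    constructor
    · rw [show (fun s => Theta s x) = (fun s => (1:ℝ) • Theta s x) by
        funext s; rw [one_smul]]
      rw [hd, ← h1smul t, hv]
    · rw [h1smul t, one_smul] at hf
      rw [hf, hn]
      norm_num
  · intro α t ht x hx
    have hb : bb t ≠ 0 := by unfold bb; nlinarith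
    obtain ⟨hd, hv, hf, hn⟩ := main_lemma t hb hx α
    rw [hd, hv, hf, hn]
    module


end
end

section
/- Let c ≥ 0, K ≥ 0 and 0 ≤ t₀ ≤ t. Let f : [t₀, t] → [0, ∞) be differentiable and g : [t₀, t] → [0, ∞) be continuous, and assume that f'(s) + g(s) ≤ (c/(1+s)) f(s) + K/(1+s)² for all s ∈ [t₀, t]. Then f(t) + ∫_{t₀}^{t} g(s) ds ≤ ((1+t)/(1+t₀))^c ( f(t₀) + (K/(1+t₀)) · (t−t₀)/(1+t) ). -/
open MeasureTheory Real
open scoped ENNReal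

noncomputable section

/-- A Gronwall-type differential inequality: if `f' + g ≤ (c/(1+s)) f + K/(1+s)²` on
`[t₀, t]` with `f, g ≥ 0`, then
`f(t) + ∫_{t₀}^t g ≤ ((1+t)/(1+t₀))^c (f(t₀) + (K/(1+t₀)) (t−t₀)/(1+t))`. -/
theorem gronwall_polynomial_bound (c K t₀ t : ℝ) (hc : 0 ≤ c) (hK : 0 ≤ K)
    (ht₀ : 0 ≤ t₀) (ht : t₀ ≤ t) (f f' g : ℝ → ℝ)
    (hf : ∀ s ∈ Set.Icc t₀ t, HasDerivWithinAt f (f' s) (Set.Icc t₀ t) s)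
    (hf0 : ∀ s ∈ Set.Icc t₀ t, 0 ≤ f s)
    (hg : ContinuousOn g (Set.Icc t₀ t))
    (hg0 : ∀ s ∈ Set.Icc t₀ t, 0 ≤ g s)
    (hineq : ∀ s ∈ Set.Icc t₀ t, f' s + g s ≤ c / (1 + s) * f s + K / (1 + s) ^ 2) :
    f t + ∫ s in t₀..t, g s ≤
      ((1 + t) / (1 + t₀)) ^ c * (f t₀ + K / (1 + t₀) * ((t - t₀) / (1 + t))) := by
  have h1t₀ : (0:ℝ) < 1 + t₀ := by linarith
  have h1t : (0:ℝ) < 1 + t := by linarith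
  set S := Set.Icc t₀ t with hS
  have h1s : ∀ s ∈ S, (0:ℝ) < 1 + s := fun s hs => by
    have := hs.1; linarith
  set F : ℝ → ℝ := fun s => f s + ∫ u in t₀..s, g u with hFdef
  -- derivative of F within S
  have hFd : ∀ s ∈ S, HasDerivWithinAt F (f' s + g s) S s := by
    intro s hs
    haveI : Fact (s ∈ Set.Icc t₀ t) := ⟨hs⟩
    have hsub : Set.Icc t₀ s ⊆ S := Set.Icc_subset_Icc le_rfl hs.2
    have hint : IntervalIntegrable g volume t₀ s :=
      (hg.mono hsub).intervalIntegrable_of_Icc hs.1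
    have hmeas : StronglyMeasurableAtFilter g (nhdsWithin s S) volume :=
      hg.stronglyMeasurableAtFilter_nhdsWithin measurableSet_Icc s
    exact (hf s hs).add
      (intervalIntegral.integral_hasDerivWithinAt_right hint hmeas (hg s hs))
  -- f ≤ F on S
  have hfF : ∀ s ∈ S, f s ≤ F s := by
    intro s hs
    have : 0 ≤ ∫ u in t₀..s, g u := by
      apply intervalIntegral.integral_nonneg hs.1
      intro u hu
      exact hg0 u ⟨hu.1, hu.2.trans hs.2⟩
    simpa [hFdef] using by linarith
  -- the comparison function
  set ψ : ℝ → ℝ := fun s =>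
    (1 + s) ^ (-c) * F s - K * (1 + t₀) ^ (-(c + 1)) * ((s - t₀) / (1 + s)) with hψdef
  set D : ℝ → ℝ := fun s =>
    1 * (-c) * (1 + s) ^ (-c - 1) * F s + (1 + s) ^ (-c) * (f' s + g s)
      - K * (1 + t₀) ^ (-(c + 1)) * ((1 + t₀) / (1 + s) ^ 2) with hDdef
  have hψd : ∀ s ∈ S, HasDerivWithinAt ψ (D s) S s := by
    intro s hs
    have h1 : HasDerivWithinAt (fun u : ℝ => 1 + u) 1 S s :=
      (hasDerivWithinAt_id s S).const_add 1
    have hpow : HasDerivWithinAt (fun u : ℝ => (1 + u) ^ (-c)) (1 * (-c) * (1 + s) ^ (-c - 1)) S s :=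
      h1.rpow_const (Or.inl (ne_of_gt (h1s s hs)))
    have hnum : HasDerivWithinAt (fun u : ℝ => u - t₀) 1 S s :=
      (hasDerivWithinAt_id s S).sub_const t₀
    have hq : HasDerivWithinAt (fun u : ℝ => (u - t₀) / (1 + u))
        ((1 * (1 + s) - (s - t₀) * 1) / (1 + s) ^ 2) S s :=
      hnum.div h1 (ne_of_gt (h1s s hs))
    have hq' : HasDerivWithinAt (fun u : ℝ => (u - t₀) / (1 + u)) ((1 + t₀) / (1 + s) ^ 2) S s := by
      convert hq using 1; ring
    have := ((hpow.mul (hFd s hs)).sub (hq'.const_mul (K * (1 + t₀) ^ (-(c + 1)))))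
    exact this
  -- D ≤ 0 on the interior
  have hDneg : ∀ s ∈ interior S, D s ≤ 0 := by
    intro s hsI
    have hs : s ∈ S := interior_subset hsI
    have h1sp := h1s s hs
    have hA0 : (0:ℝ) < (1 + s) ^ (-c) := Real.rpow_pos_of_pos h1sp _
    have key : (1 + s) ^ (-c) * (f' s + g s) ≤
        (1 + s) ^ (-c) * (c / (1 + s) * F s + K / (1 + s) ^ 2) := by
      apply mul_le_mul_of_nonneg_left _ hA0.le
      have h1 := hineq s hs
      have h2 : c / (1 + s) * f s ≤ c / (1 + s) * F s :=
        mul_le_mul_of_nonneg_left (hfF s hs) (by positivity)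
      linarith
    have e1 : (1 + s) ^ (-c) * (c / (1 + s) * F s) = c * (1 + s) ^ (-c - 1) * F s := by
      rw [show (-c - 1 : ℝ) = -c + (-1) by ring, Real.rpow_add h1sp, Real.rpow_neg_one]
      field_simp
    have e2 : K * (1 + t₀) ^ (-(c + 1)) * ((1 + t₀) / (1 + s) ^ 2)
        = K * (1 + t₀) ^ (-c) / (1 + s) ^ 2 := by
      rw [show (-(c + 1) : ℝ) = -c + (-1) by ring, Real.rpow_add h1t₀, Real.rpow_neg_one]
      field_simp
    have e3 : (1 + s) ^ (-c) ≤ (1 + t₀) ^ (-c) := by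
      apply Real.rpow_le_rpow_of_nonpos h1t₀ (by linarith [hs.1]) (by linarith)
    have e4 : (1 + s) ^ (-c) * (K / (1 + s) ^ 2) ≤ K * (1 + t₀) ^ (-c) / (1 + s) ^ 2 := by
      rw [mul_div_assoc']
      apply div_le_div_of_nonneg_right _ (by positivity)
      rw [mul_comm]
      exact mul_le_mul_of_nonneg_left e3 hK
    simp only [hDdef]
    rw [e2]
    nlinarith [key, e1, e4]
  -- ψ is antitone on S
  have hanti : AntitoneOn ψ S := by
    apply antitoneOn_of_hasDerivWithinAt_nonpos (convex_Icc t₀ t)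
      (fun s hs => (hψd s hs).continuousWithinAt)
      (fun s hs => ((hψd s (interior_subset hs)).mono interior_subset)) hDneg
  have hmem₀ : t₀ ∈ S := Set.left_mem_Icc.mpr ht
  have hmemt : t ∈ S := Set.right_mem_Icc.mpr ht
  have hψle := hanti hmem₀ hmemt ht
  have hψt₀ : ψ t₀ = (1 + t₀) ^ (-c) * f t₀ := by
    simp [hψdef, hFdef, intervalIntegral.integral_same]
  -- unfold and conclude
  have hrw : ((1 + t) / (1 + t₀)) ^ c = (1 + t) ^ c * (1 + t₀) ^ (-c) := by
    rw [Real.div_rpow h1t.le h1t₀.le, Real.rpow_neg h1t₀.le, div_eq_mul_inv]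
  have hFt : F t ≤ (1 + t) ^ c *
      ((1 + t₀) ^ (-c) * f t₀ + K * (1 + t₀) ^ (-(c + 1)) * ((t - t₀) / (1 + t))) := by
    have hψt : (1 + t) ^ (-c) * F t - K * (1 + t₀) ^ (-(c + 1)) * ((t - t₀) / (1 + t))
        ≤ (1 + t₀) ^ (-c) * f t₀ := by
      rw [← hψt₀]; exact hψle
    have hmul : (1 + t) ^ (-c) * (1 + t) ^ c = 1 := by
      rw [← Real.rpow_add h1t]; simp
    have hp : (0:ℝ) < (1 + t) ^ c := Real.rpow_pos_of_pos h1t _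
    have := mul_le_mul_of_nonneg_left hψt hp.le
    calc F t = (1 + t) ^ c * ((1 + t) ^ (-c) * F t) := by
          rw [← mul_assoc, mul_comm ((1+t)^c), hmul, one_mul]
      _ ≤ (1 + t) ^ c * ((1 + t₀) ^ (-c) * f t₀ + K * (1 + t₀) ^ (-(c + 1)) * ((t - t₀) / (1 + t))) := by
          apply mul_le_mul_of_nonneg_left _ hp.le
          linarith
  have hrhs : ((1 + t) / (1 + t₀)) ^ c * (f t₀ + K / (1 + t₀) * ((t - t₀) / (1 + t)))
      = (1 + t) ^ c *
        ((1 + t₀) ^ (-c) * f t₀ + K * (1 + t₀) ^ (-(c + 1)) * ((t - t₀) / (1 + t))) := by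
    rw [hrw, show (-(c + 1) : ℝ) = -c + (-1) by ring, Real.rpow_add h1t₀, Real.rpow_neg_one]
    field_simp
  rw [hrhs]
  exact hFt

end
end

section
/- Let m > 1 and let f : ℝ² → ℝ be measurable with ∫_{ℝ²} (1+|x|²)^m f(x)² dx < ∞. Then for every r ≥ 0 one has ∫_{{|x| ≥ r}} |f(x)| dx ≤ (π/(m−1))^{1/2} (1+r²)^{−(m−1)/2} ( ∫_{ℝ²} (1+|x|²)^m f(x)² dx )^{1/2}. -/
open MeasureTheory Real
open scoped ENNReal

noncomputable section

section TailAux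
open Set

-- piece 1: 1D improper integral
lemma oneD (m : ℝ) (hm : 1 < m) (r : ℝ) (hr : 0 ≤ r) :
    IntegrableOn (fun y : ℝ => y * (1 + y ^ 2) ^ (-m)) (Ioi r) ∧
    ∫ y in Ioi r, y * (1 + y ^ 2) ^ (-m) = (1 + r ^ 2) ^ (1 - m) / (2 * (m - 1)) := by
  have hbound : ∀ y ∈ Ioi r, ‖y * (1 + y ^ 2) ^ (-m)‖ ≤ 2 ^ m * (1 + ‖y‖) ^ (-(2 * m - 1)) := by
    intro y hy
    have hy0 : 0 < y := lt_of_le_of_lt hr hy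
    have hn : ‖y‖ = y := abs_of_pos hy0
    have h1 : ((1 : ℝ) + ‖y‖ ^ 2) ^ (-(2 * m) / 2) ≤ 2 ^ (2 * m / 2) * (1 + ‖y‖) ^ (-(2 * m)) :=
      rpow_neg_one_add_norm_sq_le (E := ℝ) y (by linarith)
    rw [hn] at h1
    have e1 : -(2 * m) / 2 = -m := by ring
    have e2 : 2 * m / 2 = m := by ring
    rw [e1, e2] at h1
    have h2 : (0:ℝ) < 1 + y := by linarith
    calc ‖y * (1 + y ^ 2) ^ (-m)‖ = y * (1 + y ^ 2) ^ (-m) := by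
          rw [norm_eq_abs, abs_of_nonneg (by positivity)]
      _ ≤ (1 + y) * (2 ^ m * (1 + y) ^ (-(2 * m))) := by
          apply mul_le_mul (by linarith) h1 (by positivity) (by linarith)
      _ = 2 ^ m * ((1 + y) ^ (-(2 * m)) * (1 + y) ^ (1:ℝ)) := by
          rw [rpow_one]; ring
      _ = 2 ^ m * (1 + ‖y‖) ^ (-(2 * m - 1)) := by
          rw [← rpow_add h2, hn]; ring_nf
  have hib : Integrable (fun y : ℝ => 2 ^ m * (1 + ‖y‖) ^ (-(2 * m - 1))) := by
    refine ((integrable_one_add_norm (E := ℝ) ?_)).const_mul _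
    simp only [Module.finrank_self]; push_cast; linarith
  have hcont : Continuous (fun y : ℝ => y * (1 + y ^ 2) ^ (-m)) := by
    apply continuous_id.mul
    apply Continuous.rpow_const (by continuity)
    intro x; left; positivity
  have hmeas := hcont.measurable
  have hint : IntegrableOn (fun y : ℝ => y * (1 + y ^ 2) ^ (-m)) (Ioi r) := by
    refine Integrable.mono' hib.integrableOn hmeas.aestronglyMeasurable ?_
    exact (ae_restrict_mem measurableSet_Ioi).mono hbound
  refine ⟨hint, ?_⟩
  have hF : ∀ y : ℝ, HasDerivAt (fun y : ℝ => (1 + y ^ 2) ^ (1 - m) / (2 * (1 - m)))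
      (y * (1 + y ^ 2) ^ (-m)) y := by
    intro y
    have hb : (0:ℝ) < 1 + y ^ 2 := by positivity
    have h0 : HasDerivAt (fun y : ℝ => y ^ 2) (2 * y) y := by
      simpa using hasDerivAt_pow 2 y
    have h1 : HasDerivAt (fun y : ℝ => 1 + y ^ 2) (2 * y) y := h0.const_add 1
    have h2 := h1.rpow_const (p := 1 - m) (Or.inl hb.ne')
    have h3 := h2.div_const (2 * (1 - m))
    refine h3.congr_deriv ?_
    have : 1 - m - 1 = -m := by ring
    rw [this, div_eq_iff (by intro h; linarith)]
    ring
  have htop : Filter.Tendsto (fun y : ℝ => (1 + y ^ 2) ^ (1 - m) / (2 * (1 - m)))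
      Filter.atTop (nhds 0) := by
    have h1 : Filter.Tendsto (fun y : ℝ => 1 + y ^ 2) Filter.atTop Filter.atTop := by
      apply Filter.tendsto_atTop_add_const_left
      exact Filter.tendsto_pow_atTop (two_ne_zero)
    have h2 : Filter.Tendsto (fun x : ℝ => x ^ (1 - m)) Filter.atTop (nhds 0) := by
      have := tendsto_rpow_neg_atTop (y := m - 1) (by linarith)
      convert this using 2; ring_nf
    have := (h2.comp h1).div_const (2 * (1 - m))
    simpa using this
  have := integral_Ioi_of_hasDerivAt_of_tendsto
    (f := fun y : ℝ => (1 + y ^ 2) ^ (1 - m) / (2 * (1 - m)))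
    (hF r).continuousAt.continuousWithinAt (fun x _ => hF x) hint htop
  rw [this]
  show 0 - (1 + r ^ 2) ^ (1 - m) / (2 * (1 - m)) = _
  rw [zero_sub, show (2 * (1 - m) : ℝ) = -(2 * (m - 1)) by ring, div_neg, neg_neg]

open Metric in
lemma ball_vol : (volume (Metric.ball (0 : E2) 1)).toReal = π := by
  rw [EuclideanSpace.volume_ball]
  simp only [Fintype.card_fin]
  norm_num
  exact sq_sqrt pi_nonneg

lemma glob_int (m : ℝ) (hm : 1 < m) :
    Integrable (fun x : E2 => (1 + ‖x‖ ^ 2) ^ (-m)) := by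
  have hib : Integrable (fun x : E2 => 2 ^ m * (1 + ‖x‖) ^ (-(2 * m))) := by
    refine (integrable_one_add_norm (E := E2) ?_).const_mul _
    rw [finrank_euclideanSpace_fin]; push_cast; linarith
  refine hib.mono' ?_ ?_
  · apply Continuous.aestronglyMeasurable
    apply Continuous.rpow_const (by continuity)
    intro x; left; positivity
  · refine Filter.Eventually.of_forall fun x => ?_
    have h1 : ((1 : ℝ) + ‖x‖ ^ 2) ^ (-(2 * m) / 2) ≤ 2 ^ (2 * m / 2) * (1 + ‖x‖) ^ (-(2 * m)) :=
      rpow_neg_one_add_norm_sq_le x (by linarith)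
    rw [show -(2*m)/2 = -m by ring, show 2*m/2 = m by ring] at h1
    calc ‖(1 + ‖x‖ ^ 2) ^ (-m)‖ = (1 + ‖x‖ ^ 2) ^ (-m) := by
          rw [norm_eq_abs, abs_of_nonneg (by positivity)]
      _ ≤ _ := h1

lemma twoD (m : ℝ) (hm : 1 < m) (r : ℝ) (hr : 0 ≤ r) :
    ∫ x in {x : E2 | r ≤ ‖x‖}, (1 + ‖x‖ ^ 2) ^ (-m) =
      π / (m - 1) * (1 + r ^ 2) ^ (1 - m) := by
  have hS : MeasurableSet {x : E2 | r ≤ ‖x‖} := by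
    have : {x : E2 | r ≤ ‖x‖} = (fun x : E2 => ‖x‖) ⁻¹' Ici r := rfl
    rw [this]; exact measurable_norm measurableSet_Ici
  set h : ℝ → ℝ := (Ici r).indicator (fun s => (1 + s ^ 2) ^ (-m)) with hh
  have key := MeasureTheory.integral_fun_norm_addHaar (volume : Measure E2) h
  have hind : ∀ x : E2, h ‖x‖ = ({x : E2 | r ≤ ‖x‖}).indicator
      (fun x : E2 => (1 + ‖x‖ ^ 2) ^ (-m)) x := by
    intro x
    simp only [hh, Set.indicator_apply, Set.mem_Ici, Set.mem_setOf_eq]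
  have hLHS : ∫ x : E2, h ‖x‖ = ∫ x in {x : E2 | r ≤ ‖x‖}, (1 + ‖x‖ ^ 2) ^ (-m) := by
    rw [show (fun x : E2 => h ‖x‖) = ({x : E2 | r ≤ ‖x‖}).indicator
        (fun x : E2 => (1 + ‖x‖ ^ 2) ^ (-m)) from funext hind]
    exact integral_indicator hS
  rw [hLHS] at key
  rw [key]
  have hdim : Module.finrank ℝ E2 = 2 := finrank_euclideanSpace_fin
  rw [hdim, measureReal_def, ball_vol]
  have hR : ∫ y in Ioi (0:ℝ), y ^ (2 - 1) • h y =
      ∫ y in Ioi r, y * (1 + y ^ 2) ^ (-m) := by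
    have e1 : ∀ y : ℝ, y ^ (2 - 1) • h y =
        (Ici r).indicator (fun y => y * (1 + y ^ 2) ^ (-m)) y := by
      intro y
      simp only [hh, pow_one, smul_eq_mul, Set.indicator_apply]
      by_cases hy : y ∈ Ici r <;> simp [hy]
    rw [show (fun y : ℝ => y ^ (2-1) • h y) =
        (Ici r).indicator (fun y => y * (1 + y ^ 2) ^ (-m)) from funext e1]
    rw [integral_indicator measurableSet_Ici, Measure.restrict_restrict measurableSet_Ici]
    apply setIntegral_congr_set
    have h1 : (Ici r : Set ℝ) =ᵐ[volume] Ioi r := (Ioi_ae_eq_Ici (a := r)).symm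
    have h2 := MeasureTheory.ae_eq_set_inter h1
      (Filter.EventuallyEq.refl (ae volume) (Ioi (0:ℝ)))
    rwa [Ioi_inter_Ioi, max_eq_left hr] at h2
  rw [hR, (oneD m hm r hr).2]
  rw [smul_eq_mul, nsmul_eq_mul]
  push_cast
  have hne : m - 1 ≠ 0 := by intro hc; rw [sub_eq_zero] at hc; linarith
  field_simp

end TailAux

/-- If `m > 1` and `∫ (1+|x|²)^m f(x)² dx < ∞`, then for every `r ≥ 0`,
`∫_{|x| ≥ r} |f| ≤ (π/(m−1))^{1/2} (1+r²)^{−(m−1)/2} (∫ (1+|x|²)^m f²)^{1/2}`. -/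
theorem tail_L1_bound_of_weighted_L2 (m : ℝ) (hm : 1 < m) (f : E2 → ℝ)
    (hmeas : Measurable f)
    (hint : Integrable (fun x : E2 => (1 + ‖x‖ ^ 2) ^ m * f x ^ 2) volume) :
    ∀ r : ℝ, 0 ≤ r →
      ∫ x in {x : E2 | r ≤ ‖x‖}, |f x| ≤
        (π / (m - 1)) ^ ((1 : ℝ) / 2) * (1 + r ^ 2) ^ (-(m - 1) / 2) *
          (∫ x : E2, (1 + ‖x‖ ^ 2) ^ m * f x ^ 2) ^ ((1 : ℝ) / 2) := by
  intro r hr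
  set S := {x : E2 | r ≤ ‖x‖} with hSdef
  have hS : MeasurableSet S := by
    have : S = (fun x : E2 => ‖x‖) ⁻¹' Set.Ici r := rfl
    rw [this]; exact measurable_norm measurableSet_Ici
  set w : E2 → ℝ := fun x => (1 + ‖x‖ ^ 2) ^ (-m / 2) with hwdef
  set g : E2 → ℝ := fun x => (1 + ‖x‖ ^ 2) ^ (m / 2) * |f x| with hgdef
  have hpos : ∀ x : E2, (0:ℝ) < 1 + ‖x‖ ^ 2 := fun x => by positivity
  have hwc : Continuous w := by
    apply Continuous.rpow_const (by continuity)
    intro x; left; exact (hpos x).ne'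
  have hgc : Measurable g := by
    apply Measurable.mul ?_ hmeas.abs
    exact (Continuous.rpow_const (by continuity) fun x => Or.inl (hpos x).ne').measurable
  have hw2 : ∀ x : E2, w x ^ 2 = (1 + ‖x‖ ^ 2) ^ (-m) := by
    intro x
    rw [hwdef]
    rw [← Real.rpow_natCast ((1 + ‖x‖ ^ 2) ^ (-m / 2)) 2, ← Real.rpow_mul (hpos x).le]
    norm_num
  have hg2 : ∀ x : E2, g x ^ 2 = (1 + ‖x‖ ^ 2) ^ m * f x ^ 2 := by
    intro x
    rw [hgdef]
    rw [mul_pow, sq_abs, ← Real.rpow_natCast ((1 + ‖x‖ ^ 2) ^ (m / 2)) 2,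
      ← Real.rpow_mul (hpos x).le]
    norm_num
  have hwmem : MemLp w (ENNReal.ofReal 2) (volume.restrict S) := by
    rw [ENNReal.ofReal_ofNat]
    refine (memLp_two_iff_integrable_sq hwc.aestronglyMeasurable.restrict).2 ?_
    rw [show (fun x => w x ^ 2) = fun x : E2 => (1 + ‖x‖ ^ 2) ^ (-m) from funext hw2]
    exact (glob_int m hm).integrableOn
  have hgmem : MemLp g (ENNReal.ofReal 2) (volume.restrict S) := by
    rw [ENNReal.ofReal_ofNat]
    refine (memLp_two_iff_integrable_sq hgc.aestronglyMeasurable.restrict).2 ?_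
    rw [show (fun x => g x ^ 2) = fun x : E2 => (1 + ‖x‖ ^ 2) ^ m * f x ^ 2 from funext hg2]
    exact hint.integrableOn
  have hpq : (2:ℝ).HolderConjugate 2 := Real.HolderConjugate.two_two
  have holder := MeasureTheory.integral_mul_norm_le_Lp_mul_Lq hpq hwmem hgmem
  have hwnn : ∀ x : E2, 0 ≤ w x := fun x => Real.rpow_nonneg (hpos x).le _
  have hgnn : ∀ x : E2, 0 ≤ g x := fun x =>
    mul_nonneg (Real.rpow_nonneg (hpos x).le _) (abs_nonneg _)
  have hLHS : ∫ x in S, |f x| = ∫ a in S, ‖w a‖ * ‖g a‖ := by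
    apply integral_congr_ae
    refine Filter.Eventually.of_forall fun a => ?_
    show |f a| = ‖w a‖ * ‖g a‖
    rw [Real.norm_eq_abs, Real.norm_eq_abs, abs_of_nonneg (hwnn a), abs_of_nonneg (hgnn a),
      hwdef, hgdef]
    simp only
    rw [← mul_assoc, ← Real.rpow_add (hpos a),
      show -m/2 + m/2 = 0 by ring, Real.rpow_zero, one_mul]
  have hwint : ∫ a in S, ‖w a‖ ^ (2:ℝ) = π / (m - 1) * (1 + r ^ 2) ^ (1 - m) := by
    rw [show (fun a : E2 => ‖w a‖ ^ (2:ℝ)) = fun a : E2 => (1 + ‖a‖ ^ 2) ^ (-m) from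
      funext fun a => by
        rw [Real.norm_eq_abs, abs_of_nonneg (hwnn a),
          show (2:ℝ) = ((2:ℕ):ℝ) by norm_num, Real.rpow_natCast, hw2 a]]
    exact twoD m hm r hr
  have hgint : ∫ a in S, ‖g a‖ ^ (2:ℝ) = ∫ a in S, (1 + ‖a‖ ^ 2) ^ m * f a ^ 2 := by
    apply integral_congr_ae
    refine Filter.Eventually.of_forall fun a => ?_
    show ‖g a‖ ^ (2:ℝ) = (1 + ‖a‖ ^ 2) ^ m * f a ^ 2
    rw [Real.norm_eq_abs, abs_of_nonneg (hgnn a),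
      show (2:ℝ) = ((2:ℕ):ℝ) by norm_num, Real.rpow_natCast, hg2 a]
  have hBle : ∫ a in S, (1 + ‖a‖ ^ 2) ^ m * f a ^ 2 ≤
      ∫ x : E2, (1 + ‖x‖ ^ 2) ^ m * f x ^ 2 := by
    apply setIntegral_le_integral hint
    exact Filter.Eventually.of_forall fun x => by positivity
  have hA : (π / (m - 1) * (1 + r ^ 2) ^ (1 - m)) ^ ((1:ℝ)/2) =
      (π / (m - 1)) ^ ((1 : ℝ) / 2) * (1 + r ^ 2) ^ (-(m - 1) / 2) := by
    rw [Real.mul_rpow (div_nonneg pi_pos.le (by linarith)) (Real.rpow_nonneg (by positivity) _),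
      ← Real.rpow_mul (by positivity : (0:ℝ) ≤ 1 + r ^ 2)]
    congr 1
    ring
  calc ∫ x in S, |f x| = ∫ a in S, ‖w a‖ * ‖g a‖ := hLHS
    _ ≤ (∫ a in S, ‖w a‖ ^ (2:ℝ)) ^ ((1:ℝ)/2) * (∫ a in S, ‖g a‖ ^ (2:ℝ)) ^ ((1:ℝ)/2) := holder
    _ = (π / (m - 1)) ^ ((1 : ℝ) / 2) * (1 + r ^ 2) ^ (-(m - 1) / 2) *
        (∫ a in S, (1 + ‖a‖ ^ 2) ^ m * f a ^ 2) ^ ((1:ℝ)/2) := by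
        rw [hwint, hgint, hA]
    _ ≤ (π / (m - 1)) ^ ((1 : ℝ) / 2) * (1 + r ^ 2) ^ (-(m - 1) / 2) *
        (∫ x : E2, (1 + ‖x‖ ^ 2) ^ m * f x ^ 2) ^ ((1:ℝ)/2) := by
        have h1 : (∫ a in S, (1 + ‖a‖ ^ 2) ^ m * f a ^ 2) ^ ((1:ℝ)/2) ≤
            (∫ x : E2, (1 + ‖x‖ ^ 2) ^ m * f x ^ 2) ^ ((1:ℝ)/2) :=
          Real.rpow_le_rpow (setIntegral_nonneg hS fun x _ => by positivity) hBle (by norm_num)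
        exact mul_le_mul_of_nonneg_left h1
          (mul_nonneg (Real.rpow_nonneg (div_nonneg pi_pos.le (by linarith)) _)
            (Real.rpow_nonneg (by positivity) _))

end
end
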